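/- arXiv:0811.3048 — 10 statements merged into one kernel-verified Lean document; each statement's English description precedes it below -/
import Mathlib

section
/- Let η and δ be real numbers with 0 ≤ η ≤ δ ≤ 1/2 and δ > 0. Set γ = (1+2η)/(2(δ+η)), Δτ = 2δγ, and take balance parameter b = 3/2. Define B = γ + (b−1)(γ−1) and D = Δτ + (b−1)(Δτ−1). Then D ≥ 1/4 and B/D ≤ 3/(2δ). -/
/-! Since η ≤ δ, the background drop Δτ = (1 + 2η)·δ/(δ + η) is at least 1/2. Everything else is
linear in Δτ: D = bΔτ - (b - 1) ≥ 1 - b/2, and for b = 3/2 the ratio bound 2δB ≤ 3D reduces,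
via Δτ = 2δγ, to 3/2 - δ ≤ 3Δτ. -/

lemma half_le_div_add_of_le {δ η : ℝ} (hηδ : η ≤ δ) (hpos : 0 < δ + η) :
    1 / 2 ≤ δ / (δ + η) := by
  rw [le_div_iff₀ hpos]
  linarith

lemma half_le_two_mul_mul_div {δ η : ℝ} (hη0 : 0 ≤ η) (hηδ : η ≤ δ) (hδ0 : 0 < δ) :
    1 / 2 ≤ 2 * δ * ((1 + 2 * η) / (2 * (δ + η))) := by
  have hpos : 0 < δ + η := by linarith
  have hrw : 2 * δ * ((1 + 2 * η) / (2 * (δ + η))) = (1 + 2 * η) * (δ / (δ + η)) := by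
    field_simp
  rw [hrw]
  calc (1 : ℝ) / 2 = 1 * (1 / 2) := by ring
    _ ≤ (1 + 2 * η) * (δ / (δ + η)) :=
      mul_le_mul (by linarith) (half_le_div_add_of_le hηδ hpos) (by norm_num) (by linarith)

lemma one_sub_half_le_add_mul_sub_one {Δτ b : ℝ} (hΔτ : 1 / 2 ≤ Δτ) (hb : 0 ≤ b) :
    1 - b / 2 ≤ Δτ + (b - 1) * (Δτ - 1) := by
  nlinarith [mul_nonneg hb (sub_nonneg.2 hΔτ)]

lemma flux_div_drop_le {δ γ Δτ : ℝ} (hδ0 : 0 < δ) (hΔτ : Δτ = 2 * δ * γ) (hhalf : 1 / 2 ≤ Δτ) :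
    (γ + (3 / 2 - 1) * (γ - 1)) / (Δτ + (3 / 2 - 1) * (Δτ - 1)) ≤ 3 / (2 * δ) := by
  have hD : 1 / 4 ≤ Δτ + (3 / 2 - 1) * (Δτ - 1) := by
    have := one_sub_half_le_add_mul_sub_one hhalf (b := 3 / 2) (by norm_num)
    linarith
  rw [div_le_div_iff₀ (by linarith) (by positivity)]
  subst hΔτ
  linarith

theorem stmt_0_general (η δ γ Δτ b B D : ℝ)
    (hη0 : 0 ≤ η) (hηδ : η ≤ δ) (hδ0 : 0 < δ)
    (hγ : γ = (1 + 2*η) / (2*(δ + η)))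
    (hΔτ : Δτ = 2*δ*γ)
    (hb : b = 3/2)
    (hB : B = γ + (b - 1)*(γ - 1))
    (hD : D = Δτ + (b - 1)*(Δτ - 1)) :
    1/4 ≤ D ∧ B / D ≤ 3/(2*δ) := by
  have hhalf : 1 / 2 ≤ Δτ := hΔτ ▸ hγ ▸ half_le_two_mul_mul_div hη0 hηδ hδ0
  subst hb hB hD
  refine ⟨?_, flux_div_drop_le hδ0 hΔτ hhalf⟩
  have := one_sub_half_le_add_mul_sub_one hhalf (b := 3 / 2) (by norm_num)
  linarith

/-- Case I (δ ≥ η, small Biot number) of Lemma 1: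
with γ = (1+2η)/(2(δ+η)), Δτ = 2δγ, b = 3/2, B = γ+(b−1)(γ−1), D = Δτ+(b−1)(Δτ−1),
one has D ≥ 1/4 and B/D ≤ 3/(2δ). -/
theorem stmt_0 (η δ γ Δτ b B D : ℝ)
    (hη0 : 0 ≤ η) (hηδ : η ≤ δ) (hδ2 : δ ≤ 1/2) (hδ0 : 0 < δ)
    (hγ : γ = (1 + 2*η) / (2*(δ + η)))
    (hΔτ : Δτ = 2*δ*γ)
    (hb : b = 3/2)
    (hB : B = γ + (b - 1)*(γ - 1))
    (hD : D = Δτ + (b - 1)*(Δτ - 1)) :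
    1/4 ≤ D ∧ B / D ≤ 3/(2*δ) :=
  stmt_0_general η δ γ Δτ b B D hη0 hηδ hδ0 hγ hΔτ hb hB hD
end

section
/- Let η and δ be real numbers with 0 < δ ≤ η ≤ 1/2. Set γ = (1+2η)/(2(δ+η)), Δτ = 2δγ, and take balance parameter b = 1 + δ/(2η). Define B = γ + (b−1)(γ−1) and D = Δτ + (b−1)(Δτ−1). Then D ≥ δ/(4η) and B/D ≤ 3/(2δ). -/
/-!
With `b - 1 = δ/(2η)` both balanced quantities become rational functions over `δ + η`:
`D = δ(1 + 4η + 2δ)/(2(δ + η))` and `B = (2η + δ + 4η² - 2δ²)/(4η(δ + η))`.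
Both bounds then reduce to polynomial inequalities valid as soon as `0 < δ ≤ η`; for the second,
`3D - 2δB = δ(η - δ + 8η² + 6ηδ + 2δ²)/(2η(δ + η))`.
-/

/-- The combination `x + (b - 1)(x - 1)` defining both `B` (with `x = γ`) and `D` (with `x = Δτ`). -/
def balance (b x : ℝ) : ℝ := x + (b - 1) * (x - 1)

noncomputable def boundarySlope (η δ : ℝ) : ℝ := (1 + 2 * η) / (2 * (δ + η))

section CaseII

variable {η δ : ℝ}

theorem balance_drop_eq (hη : η ≠ 0) (hs : δ + η ≠ 0) :
    balance (1 + δ / (2 * η)) (2 * δ * boundarySlope η δ) =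
      δ * (1 + 4 * η + 2 * δ) / (2 * (δ + η)) := by
  unfold balance boundarySlope
  field_simp
  ring

theorem balance_flux_eq (hη : η ≠ 0) (hs : δ + η ≠ 0) :
    balance (1 + δ / (2 * η)) (boundarySlope η δ) =
      (2 * η + δ + 4 * η ^ 2 - 2 * δ ^ 2) / (4 * η * (δ + η)) := by
  unfold balance boundarySlope
  field_simp
  ring

theorem div_four_mul_le_drop (hδ : 0 < δ) (hδη : δ ≤ η) :
    δ / (4 * η) ≤ δ * (1 + 4 * η + 2 * δ) / (2 * (δ + η)) := by
  have hη : 0 < η := hδ.trans_le hδη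
  rw [div_le_div_iff₀ (by positivity) (by positivity)]
  nlinarith [mul_pos hη hδ, mul_pos (mul_pos hη hδ) hδ]

theorem two_mul_mul_flux_le_three_mul_drop (hδ : 0 < δ) (hδη : δ ≤ η) :
    2 * δ * ((2 * η + δ + 4 * η ^ 2 - 2 * δ ^ 2) / (4 * η * (δ + η))) ≤
      3 * (δ * (1 + 4 * η + 2 * δ) / (2 * (δ + η))) := by
  have hη : 0 < η := hδ.trans_le hδη
  have key : 3 * (δ * (1 + 4 * η + 2 * δ) / (2 * (δ + η))) -
      2 * δ * ((2 * η + δ + 4 * η ^ 2 - 2 * δ ^ 2) / (4 * η * (δ + η))) =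
      δ * (η - δ + 8 * η ^ 2 + 6 * η * δ + 2 * δ ^ 2) / (2 * η * (δ + η)) := by
    field_simp
    ring
  have : 0 ≤ δ * (η - δ + 8 * η ^ 2 + 6 * η * δ + 2 * δ ^ 2) / (2 * η * (δ + η)) := by
    have : 0 ≤ η - δ := by linarith
    positivity
  linarith

end CaseII

theorem stmt_1_general (η δ γ Δτ b B D : ℝ)
    (hδ0 : 0 < δ) (hδη : δ ≤ η)
    (hγ : γ = (1 + 2*η) / (2*(δ + η)))
    (hΔτ : Δτ = 2*δ*γ)
    (hb : b = 1 + δ/(2*η))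
    (hB : B = γ + (b - 1)*(γ - 1))
    (hD : D = Δτ + (b - 1)*(Δτ - 1)) :
    δ/(4*η) ≤ D ∧ B / D ≤ 3/(2*δ) := by
  have hη : 0 < η := hδ0.trans_le hδη
  have hD' : D = δ * (1 + 4 * η + 2 * δ) / (2 * (δ + η)) := by
    rw [hD, hΔτ, hγ, hb, ← balance_drop_eq hη.ne' (by positivity)]
    rfl
  have hB' : B = (2 * η + δ + 4 * η ^ 2 - 2 * δ ^ 2) / (4 * η * (δ + η)) := by
    rw [hB, hγ, hb, ← balance_flux_eq hη.ne' (by positivity)]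
    rfl
  have hlower : δ / (4 * η) ≤ D := hD' ▸ div_four_mul_le_drop hδ0 hδη
  have hDpos : 0 < D := lt_of_lt_of_le (by positivity) hlower
  refine ⟨hlower, ?_⟩
  rw [div_le_div_iff₀ hDpos (by positivity), mul_comm B]
  simpa only [hB', hD'] using two_mul_mul_flux_le_three_mul_drop hδ0 hδη

/-- Case II (0 < δ ≤ η ≤ 1/2) of Lemma 1:
with γ = (1+2η)/(2(δ+η)), Δτ = 2δγ, b = 1 + δ/(2η), B = γ+(b−1)(γ−1), D = Δτ+(b−1)(Δτ−1),
one has D ≥ δ/(4η) and B/D ≤ 3/(2δ). -/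
theorem stmt_1 (η δ γ Δτ b B D : ℝ)
    (hδ0 : 0 < δ) (hδη : δ ≤ η) (hη : η ≤ 1/2)
    (hγ : γ = (1 + 2*η) / (2*(δ + η)))
    (hΔτ : Δτ = 2*δ*γ)
    (hb : b = 1 + δ/(2*η))
    (hB : B = γ + (b - 1)*(γ - 1))
    (hD : D = Δτ + (b - 1)*(Δτ - 1)) :
    δ/(4*η) ≤ D ∧ B / D ≤ 3/(2*δ) :=
  stmt_1_general η δ γ Δτ b B D hδ0 hδη hγ hΔτ hb hB hD
end

section
/- Let η and δ be real numbers with 0 < δ ≤ 1/2 ≤ η < ∞. Set γ = (1+2η)/(2(δ+η)), Δτ = 2δγ, and take balance parameter b = 1 + (1+2η)δ/(4η). Define B = γ + (b−1)(γ−1) and D = Δτ + (b−1)(Δτ−1). Then D ≥ (3/8)·((1+2η)/η)·δ and B/D ≤ 5/(6δ). -/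
/-!
At the critical balance parameter both bounds are explicit rational functions of `η` and `δ`:
`D = δ(1+2η)(3+2δ)/(4(δ+η))` and `B/D = (4η+δ-2δ²)/(2ηδ(3+2δ))`. The gaps in the two claimed
inequalities are then fractions with positive denominators and numerators
`δ(1+2η)(3(η-δ)+4δη)` and `6(η-δ)+20ηδ+12δ²`, which are nonnegative because `δ ≤ 1/2 ≤ η`.
-/

namespace RayleighBenard

noncomputable section

def boundarySlope (η δ : ℝ) : ℝ := (1 + 2*η) / (2*(δ + η))

def fluxBound (η δ b : ℝ) : ℝ := boundarySlope η δ + (b - 1)*(boundarySlope η δ - 1)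

def dropBound (η δ b : ℝ) : ℝ := 2*δ*boundarySlope η δ + (b - 1)*(2*δ*boundarySlope η δ - 1)

def criticalBalance (η δ : ℝ) : ℝ := 1 + (1 + 2*η)*δ/(4*η)

end

variable {η δ : ℝ}

theorem dropBound_criticalBalance (hη : 0 < η) (hδη : 0 < δ + η) :
    dropBound η δ (criticalBalance η δ) = δ*(1 + 2*η)*(3 + 2*δ)/(4*(δ + η)) := by
  unfold dropBound criticalBalance boundarySlope
  field_simp
  ring

theorem fluxBound_criticalBalance (hη : 0 < η) (hδη : 0 < δ + η) :
    fluxBound η δ (criticalBalance η δ) = (1 + 2*η)*(4*η + δ - 2*δ^2)/(8*η*(δ + η)) := by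
  unfold fluxBound criticalBalance boundarySlope
  field_simp
  ring

theorem fluxBound_div_dropBound_criticalBalance (hδ : 0 < δ) (hη : 0 < η) :
    fluxBound η δ (criticalBalance η δ) / dropBound η δ (criticalBalance η δ)
      = (4*η + δ - 2*δ^2)/(2*η*δ*(3 + 2*δ)) := by
  have hδη : 0 < δ + η := by linarith
  rw [fluxBound_criticalBalance hη hδη, dropBound_criticalBalance hη hδη]
  field_simp
  ring

theorem le_dropBound_criticalBalance (hδ : 0 < δ) (hδη : δ ≤ η) :
    3/8 * ((1 + 2*η)/η) * δ ≤ dropBound η δ (criticalBalance η δ) := by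
  have hη : 0 < η := hδ.trans_le hδη
  have gap : dropBound η δ (criticalBalance η δ) - 3/8 * ((1 + 2*η)/η) * δ
      = δ*(1 + 2*η)*(3*(η - δ) + 4*δ*η)/(8*η*(δ + η)) := by
    rw [dropBound_criticalBalance hη (by linarith)]
    field_simp
    ring
  have : 0 ≤ δ*(1 + 2*η)*(3*(η - δ) + 4*δ*η)/(8*η*(δ + η)) := by
    have : 0 ≤ η - δ := sub_nonneg.mpr hδη
    positivity
  linarith

theorem fluxBound_div_dropBound_le (hδ : 0 < δ) (hδη : δ ≤ η) :
    fluxBound η δ (criticalBalance η δ) / dropBound η δ (criticalBalance η δ) ≤ 5/(6*δ) := by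
  have hη : 0 < η := hδ.trans_le hδη
  have gap : 5/(6*δ) - (4*η + δ - 2*δ^2)/(2*η*δ*(3 + 2*δ))
      = (6*(η - δ) + 20*η*δ + 12*δ^2)/(12*η*δ*(3 + 2*δ)) := by
    field_simp
    ring
  have : 0 ≤ (6*(η - δ) + 20*η*δ + 12*δ^2)/(12*η*δ*(3 + 2*δ)) := by
    have : 0 ≤ η - δ := sub_nonneg.mpr hδη
    positivity
  rw [fluxBound_div_dropBound_criticalBalance hδ hη]
  linarith

end RayleighBenard

open RayleighBenard in
/-- Case III (η ≥ 1/2) of Lemma 1: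
with γ = (1+2η)/(2(δ+η)), Δτ = 2δγ, b = 1 + (1+2η)δ/(4η), B = γ+(b−1)(γ−1),
D = Δτ+(b−1)(Δτ−1), one has D ≥ (3/8)((1+2η)/η)δ and B/D ≤ 5/(6δ). -/
theorem stmt_2 (η δ γ Δτ b B D : ℝ)
    (hδ0 : 0 < δ) (hδ2 : δ ≤ 1/2) (hη : 1/2 ≤ η)
    (hγ : γ = (1 + 2*η) / (2*(δ + η)))
    (hΔτ : Δτ = 2*δ*γ)
    (hb : b = 1 + (1 + 2*η)*δ/(4*η))
    (hB : B = γ + (b - 1)*(γ - 1))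
    (hD : D = Δτ + (b - 1)*(Δτ - 1)) :
    3/8 * ((1 + 2*η)/η) * δ ≤ D ∧ B / D ≤ 5/(6*δ) := by
  have hδη : δ ≤ η := hδ2.trans hη
  subst hγ hΔτ hb hB hD
  exact ⟨le_dropBound_criticalBalance hδ0 hδη, fluxBound_div_dropBound_le hδ0 hδη⟩
end

section
/- Let η and R be real numbers with 0 ≤ η ≤ 1/2 and R > 0. Set δ_s = 2·√(2/3)·R^(−1/2) and R_e = 3R (corresponding to balance parameter b_s = 3/2). If δ_c > 0 satisfies δ_c⁴ = 32·(δ_c + η)²/((1+2η)²·R_e), then δ_s ≤ δ_c. -/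
lemma mul_one_add_two_mul_le_two_mul_add {δ η : ℝ} (hδ : 0 ≤ δ) (hη0 : 0 ≤ η) (hη : η ≤ 1/2) :
    δ * (1 + 2 * η) ≤ 2 * (δ + η) := by
  nlinarith [mul_nonneg hδ (by linarith : (0:ℝ) ≤ 1 - 2 * η)]

/-- Since `2 (δ + η) ≥ δ (1 + 2η)`, the right-hand side is at least `8 δ² / Rₑ`. -/
lemma eight_le_sq_mul_of_pow_four_eq {δ η Re : ℝ} (hδ : 0 < δ) (hη0 : 0 ≤ η) (hη : η ≤ 1/2)
    (hRe : 0 < Re) (h : δ ^ 4 = 32 * (δ + η) ^ 2 / ((1 + 2 * η) ^ 2 * Re)) :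
    8 ≤ δ ^ 2 * Re := by
  have hpos : 0 < (1 + 2 * η) ^ 2 := by positivity
  have hkey : δ ^ 4 * Re * (1 + 2 * η) ^ 2 = 32 * (δ + η) ^ 2 := by
    rw [h]; field_simp
  have hlow : (δ * (1 + 2 * η)) ^ 2 ≤ (2 * (δ + η)) ^ 2 :=
    pow_le_pow_left₀ (by positivity) (mul_one_add_two_mul_le_two_mul_add hδ.le hη0 hη) 2
  have hscaled : 8 * δ ^ 2 * (1 + 2 * η) ^ 2 ≤ δ ^ 2 * Re * δ ^ 2 * (1 + 2 * η) ^ 2 := by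
    nlinarith
  exact le_of_mul_le_mul_right (le_of_mul_le_mul_right hscaled hpos) (by positivity)

lemma mul_rpow_neg_half_sq {R : ℝ} (hR : 0 < R) (c : ℝ) :
    (c * R ^ (-(1:ℝ)/2)) ^ 2 = c ^ 2 / R := by
  rw [mul_pow, ← Real.rpow_mul_natCast hR.le]
  norm_num [Real.rpow_neg_one, div_eq_mul_inv]

/-- Case I of Lemma 2: for 0 ≤ η ≤ 1/2 and R > 0, with δ_s = 2√(2/3)·R^(−1/2)
and R_e = 3R, if δ_c > 0 satisfies δ_c⁴ = 32(δ_c+η)²/((1+2η)²R_e), then δ_s ≤ δ_c. -/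
theorem stmt_5 (η R δs Re δc : ℝ)
    (hη0 : 0 ≤ η) (hη : η ≤ 1/2) (hR : 0 < R)
    (hδs : δs = 2 * Real.sqrt (2/3) * R ^ (-(1:ℝ)/2))
    (hRe : Re = 3 * R)
    (hδc0 : 0 < δc)
    (hδc : δc ^ 4 = 32 * (δc + η)^2 / ((1 + 2*η)^2 * Re)) :
    δs ≤ δc := by
  subst hRe
  have hδs_sq : δs ^ 2 = 8 / (3 * R) := by
    rw [hδs, mul_rpow_neg_half_sq hR, mul_pow, Real.sq_sqrt (by norm_num)]
    field_simp; norm_num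
  have hδc_sq : 8 / (3 * R) ≤ δc ^ 2 :=
    (div_le_iff₀ (by positivity)).2 (eight_le_sq_mul_of_pow_four_eq hδc0 hη0 hη (by positivity) hδc)
  have hδs0 : 0 ≤ δs := by rw [hδs]; positivity
  exact (pow_le_pow_iff_left₀ hδs0 hδc0.le two_ne_zero).1 (hδs_sq ▸ hδc_sq)
end

section
/- Let η and R be real numbers with 0 < η ≤ 1/2 and R ≥ (8/3)·η^(−2). Set δ_s = 2·(η/3)^(1/3)·R^(−1/3), b_s = 1 + δ_s/(2η), and R_e = b_s·R/(b_s − 1). If δ_c > 0 satisfies δ_c⁴ = 32·(δ_c + η)²/((1+2η)²·R_e), then δ_s ≤ δ_c. -/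
/-!
With `δ_s³ = 8η/(3R)` the hypothesis on `R` gives `δ_s ≤ η`, and `R_e = R(2η + δ_s)/δ_s`.
The equation for `δ_c` says `f(δ_c) = 32/((1+2η)² R_e)` for `f(δ) = δ⁴/(δ+η)²`, which is strictly
increasing on `δ > 0`. Using `(1+2η)² ≤ 4` and `2η + δ_s ≤ 3η`, one gets
`f(δ_s) ≤ 32/((1+2η)² R_e)`, so `δ_s ≤ δ_c`.
-/

open Set

lemma two_mul_rpow_third_mul_rpow_neg_third_pow_three {x y : ℝ} (hx : 0 ≤ x) (hy : 0 ≤ y) :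
    (2 * x ^ ((1:ℝ)/3) * y ^ (-(1:ℝ)/3)) ^ 3 = 8 * x / y := by
  have cube_cbrt : ∀ {z : ℝ}, 0 ≤ z → (z ^ ((1:ℝ)/3)) ^ 3 = z := fun hz => by
    simpa using Real.rpow_inv_natCast_pow (n := 3) hz three_ne_zero
  rw [neg_div, Real.rpow_neg hy, mul_pow, mul_pow, inv_pow, cube_cbrt hx, cube_cbrt hy]
  ring

lemma strictMonoOn_pow_four_div_sq_add {η : ℝ} (hη : 0 ≤ η) :
    StrictMonoOn (fun δ : ℝ => δ ^ 4 / (δ + η) ^ 2) (Ioi 0) := by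
  intro a (ha : 0 < a) b (hb : 0 < b) hab
  have hsq : a ^ 2 * (b + η) < b ^ 2 * (a + η) := by
    have : 0 < (b - a) * (a * b + η * (a + b)) := mul_pos (sub_pos.2 hab) (by positivity)
    nlinarith
  have : (a ^ 2 * (b + η)) ^ 2 < (b ^ 2 * (a + η)) ^ 2 :=
    pow_lt_pow_left₀ hsq (by positivity) two_ne_zero
  rw [div_lt_div_iff₀ (by positivity) (by positivity)]
  linarith

lemma one_add_div_mul_div_one_add_div_sub_one {η δ : ℝ} (hη : η ≠ 0) (hδ : δ ≠ 0) (R : ℝ) :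
    (1 + δ / (2 * η)) * R / (1 + δ / (2 * η) - 1) = R * (2 * η + δ) / δ := by
  rw [add_sub_cancel_left]
  field_simp

lemma pow_four_div_sq_add_le {η δ R : ℝ} (hδ : 0 < δ) (hδη : δ ≤ η) (hη : η ≤ 1/2)
    (hR : 0 < R) (hcube : δ ^ 3 * R = 8 * η / 3) :
    δ ^ 4 / (δ + η) ^ 2 ≤ 32 / ((1 + 2 * η) ^ 2 * (R * (2 * η + δ) / δ)) := by
  have hη0 : 0 < η := hδ.trans_le hδη
  have hfactor : (1 + 2 * η) ^ 2 * (2 * η + δ) ≤ 4 * (3 * η) :=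
    mul_le_mul (by nlinarith) (by linarith) (by positivity) (by norm_num)
  have hlhs : δ ^ 4 * ((1 + 2 * η) ^ 2 * (R * (2 * η + δ) / δ))
      = 8 * η / 3 * ((1 + 2 * η) ^ 2 * (2 * η + δ)) := by
    rw [← hcube]; field_simp
  rw [div_le_div_iff₀ (by positivity) (by positivity), hlhs]
  nlinarith [mul_le_mul_of_nonneg_left hfactor (by positivity : (0:ℝ) ≤ 8 * η / 3),
    mul_pos hδ hη0]

/-- Case II of Lemma 2: for 0 < η ≤ 1/2 and R ≥ (8/3)η⁻², with
δ_s = 2(η/3)^(1/3)·R^(−1/3), b_s = 1 + δ_s/(2η) and R_e = b_s·R/(b_s−1),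
if δ_c > 0 satisfies δ_c⁴ = 32(δ_c+η)²/((1+2η)²R_e), then δ_s ≤ δ_c. -/
theorem stmt_6 (η R δs bs Re δc : ℝ)
    (hη0 : 0 < η) (hη : η ≤ 1/2) (hR : 8/(3*η^2) ≤ R)
    (hδs : δs = 2 * (η/3) ^ ((1:ℝ)/3) * R ^ (-(1:ℝ)/3))
    (hbs : bs = 1 + δs/(2*η))
    (hRe : Re = bs * R / (bs - 1))
    (hδc0 : 0 < δc)
    (hδc : δc ^ 4 = 32 * (δc + η)^2 / ((1 + 2*η)^2 * Re)) :
    δs ≤ δc := by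
  have hR0 : 0 < R := lt_of_lt_of_le (by positivity) hR
  have hδs0 : 0 < δs := by rw [hδs]; positivity
  have hcube : δs ^ 3 * R = 8 * η / 3 := by
    rw [hδs, two_mul_rpow_third_mul_rpow_neg_third_pow_three (by positivity) hR0.le]
    field_simp
  have hδsη : δs ≤ η := by
    refine le_of_pow_le_pow_left₀ three_ne_zero hη0.le ?_
    rw [div_le_iff₀ (by positivity)] at hR
    nlinarith
  have hRe' : Re = R * (2 * η + δs) / δs := by
    rw [hRe, hbs, one_add_div_mul_div_one_add_div_sub_one hη0.ne' hδs0.ne']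
  have hδc' : δc ^ 4 / (δc + η) ^ 2 = 32 / ((1 + 2 * η) ^ 2 * Re) := by
    rw [hδc]; field_simp
  rw [← (strictMonoOn_pow_four_div_sq_add hη0.le).le_iff_le hδs0 hδc0, hδc', hRe']
  exact pow_four_div_sq_add_le hδs0 hδsη hη hR0 hcube
end

section
/- Let η and R be real numbers with 1/2 ≤ η < ∞ and R > 0. Set δ_s = 2·(2/3)^(1/3)·(η/(1+2η))^(1/3)·R^(−1/3), b_s = 1 + (1+2η)·δ_s/(4η), and R_e = b_s·R/(b_s − 1), and assume δ_s ≤ 1/2. If δ_c > 0 satisfies δ_c⁴ = 32·(δ_c + η)²/((1+2η)²·R_e), then δ_s ≤ δ_c. -/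
/-!
The map `δ ↦ δ⁴ / (δ + η)²` is strictly increasing on `(0, ∞)`, and `δ_c` is where it takes the
value `32 / ((1 + 2η)² R_e)`. So it suffices that `δ_s⁴ (1 + 2η)² R_e ≤ 32 (δ_s + η)²`. The choice
of `δ_s` makes `R δ_s³ = 16η / (3(1 + 2η))`, which turns the left side into `64 η² b_s / 3`;
this is at most `32 η²` because `b_s ≤ 3/2`.
-/

lemma rpow_div_three_pow_three {x : ℝ} (hx : 0 ≤ x) (a : ℝ) : (x ^ (a / 3)) ^ 3 = x ^ a := by
  rw [← Real.rpow_natCast, ← Real.rpow_mul hx]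
  norm_num

lemma mul_pow_three_of_eq_boundaryLayerWidth {η R δ : ℝ} (hη : 0 < η) (hR : 0 < R)
    (hδ : δ = 2 * (2/3 : ℝ) ^ ((1:ℝ)/3) * (η/(1 + 2*η)) ^ ((1:ℝ)/3) * R ^ (-(1:ℝ)/3)) :
    R * δ ^ 3 = 16 * η / (3 * (1 + 2 * η)) := by
  have hR3 : (R ^ (-(1:ℝ)/3)) ^ 3 = R⁻¹ := by
    rw [rpow_div_three_pow_three hR.le, Real.rpow_neg_one]
  rw [hδ, mul_pow, mul_pow, mul_pow, rpow_div_three_pow_three (by norm_num),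
    rpow_div_three_pow_three (by positivity), hR3, Real.rpow_one, Real.rpow_one]
  field_simp
  ring

lemma le_of_pow_four_mul_sq_add_le {a b η : ℝ} (ha : 0 < a) (hb : 0 < b) (hη : 0 ≤ η)
    (h : a ^ 4 * (b + η) ^ 2 ≤ b ^ 4 * (a + η) ^ 2) : a ≤ b := by
  have hsq : a ^ 2 * (b + η) ≤ b ^ 2 * (a + η) := by
    rw [← pow_le_pow_iff_left₀ (by positivity) (by positivity) two_ne_zero]
    linear_combination h
  have hfactor : (a - b) * (a * b + η * (a + b)) ≤ 0 := by linear_combination hsq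
  exact sub_nonpos.mp (nonpos_of_mul_nonpos_left hfactor (by positivity))

lemma pow_four_mul_effectiveRayleigh_eq {η R δ b : ℝ} (hη : 0 < η) (hδ : 0 < δ)
    (hcube : R * δ ^ 3 = 16 * η / (3 * (1 + 2 * η))) (hb : b - 1 = (1 + 2 * η) * δ / (4 * η)) :
    δ ^ 4 * ((1 + 2 * η) ^ 2 * (b * R / (b - 1))) = 64 * η ^ 2 * b / 3 := by
  have hη2 : 0 < 1 + 2 * η := by positivity
  calc δ ^ 4 * ((1 + 2 * η) ^ 2 * (b * R / (b - 1)))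
      = 4 * η * (1 + 2 * η) * b * (R * δ ^ 3) := by rw [hb]; field_simp
    _ = 64 * η ^ 2 * b / 3 := by rw [hcube]; field_simp; ring

/-- Case III of Lemma 2: for 1/2 ≤ η < ∞ and R > 0, with
δ_s = 2(2/3)^(1/3)·(η/(1+2η))^(1/3)·R^(−1/3), b_s = 1 + (1+2η)δ_s/(4η),
R_e = b_s·R/(b_s−1), and δ_s ≤ 1/2, if δ_c > 0 satisfies
δ_c⁴ = 32(δ_c+η)²/((1+2η)²R_e), then δ_s ≤ δ_c. -/
theorem stmt_7 (η R δs bs Re δc : ℝ)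
    (hη : 1/2 ≤ η) (hR : 0 < R)
    (hδs : δs = 2 * (2/3 : ℝ) ^ ((1:ℝ)/3) * (η/(1 + 2*η)) ^ ((1:ℝ)/3) * R ^ (-(1:ℝ)/3))
    (hbs : bs = 1 + (1 + 2*η) * δs / (4*η))
    (hRe : Re = bs * R / (bs - 1))
    (hδs2 : δs ≤ 1/2)
    (hδc0 : 0 < δc)
    (hδc : δc ^ 4 = 32 * (δc + η)^2 / ((1 + 2*η)^2 * Re)) :
    δs ≤ δc := by
  have hη0 : 0 < η := by linarith
  have hδs0 : 0 < δs := by rw [hδs]; positivity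
  have hb1 : bs - 1 = (1 + 2 * η) * δs / (4 * η) := by rw [hbs]; ring
  have hb1_pos : 0 < bs - 1 := by rw [hb1]; positivity
  have hbs_le : bs ≤ 3 / 2 := by
    have : (1 + 2 * η) * δs / (4 * η) ≤ 1 / 2 := by
      rw [div_le_iff₀ (by positivity)]; nlinarith
    linarith
  have hRe0 : 0 < Re := by rw [hRe]; exact div_pos (mul_pos (by linarith) hR) hb1_pos
  have hδs_le : δs ^ 4 * ((1 + 2 * η) ^ 2 * Re) ≤ 32 * (δs + η) ^ 2 := by
    have hcube := mul_pow_three_of_eq_boundaryLayerWidth hη0 hR hδs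
    rw [hRe, pow_four_mul_effectiveRayleigh_eq hη0 hδs0 hcube hb1]
    nlinarith [mul_pos hδs0 hη0]
  have hδc_eq : δc ^ 4 * ((1 + 2 * η) ^ 2 * Re) = 32 * (δc + η) ^ 2 := by
    rw [hδc]; field_simp
  refine le_of_pow_four_mul_sq_add_le hδs0 hδc0 hη0.le
    (le_of_mul_le_mul_right ?_ (by norm_num : (0:ℝ) < 32))
  calc δs ^ 4 * (δc + η) ^ 2 * 32 = δc ^ 4 * (δs ^ 4 * ((1 + 2 * η) ^ 2 * Re)) := by
        linear_combination -δs ^ 4 * hδc_eq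
    _ ≤ δc ^ 4 * (32 * (δs + η) ^ 2) := by gcongr
    _ = δc ^ 4 * (δs + η) ^ 2 * 32 := by ring
end

section
/- Let δ, γ, R_e, k be real numbers with 0 < δ ≤ 1/2, γ > 0, R_e > 0, k > 0, and suppose γ²·δ⁴ ≤ 8/R_e. Define σ : [0,1] → ℝ by σ(z) = −γ for z ∈ [0,δ] ∪ [1−δ, 1] and σ(z) = 0 otherwise. Then for all complex-valued functions w, θ on [0,1] with w twice continuously differentiable, θ continuously differentiable, and w(0) = w(1) = 0, w'(0) = w'(1) = 0, one has ∫₀¹ [ (1/R_e)·( k²·|w(z)|² + 2·|w'(z)|² + (1/k²)·|w''(z)|² ) + 2·σ(z)·Re( w(z)·conj(θ(z)) ) + k²·|θ(z)|² + |θ'(z)|² ] dz ≥ 0. -/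
/-!
On each boundary layer of width `δ` the clamped velocity is controlled by its second derivative:
Cauchy–Schwarz applied twice from the wall gives `‖w' s‖² ≤ s ∫ ‖w''‖²` and then
`‖w z‖² ≤ z ∫₀^z ‖w'‖² ≤ z³/2 ∫ ‖w''‖²`, hence `∫ ‖w‖² ≤ δ⁴/8 ∫ ‖w''‖²` over the layer.
Pointwise, Young's inequality `2γ‖w‖‖θ‖ ≤ (γ/k)²‖w‖² + k²‖θ‖²` lets `k²‖θ‖²` absorb the
`θ`-part of the indefinite term, and the remaining `-(γ/k)² ∫ ‖w‖²` is absorbed by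
`1/(Re k²) ∫ ‖w''‖²` exactly when `γ²δ⁴ ≤ 8/Re`. Away from the layers `σ = 0` and the
integrand is a sum of squares.
-/

open MeasureTheory Set

theorem sq_intervalIntegral_le_mul {g : ℝ → ℝ} {a b : ℝ} (hab : a ≤ b)
    (hg : IntervalIntegrable g volume a b)
    (hg2 : IntervalIntegrable (fun x => g x ^ 2) volume a b) :
    (∫ x in a..b, g x) ^ 2 ≤ (b - a) * ∫ x in a..b, g x ^ 2 := by
  set I := ∫ x in a..b, g x
  set J := ∫ x in a..b, g x ^ 2
  have hquad : ∀ t : ℝ, 0 ≤ (b - a) * (t * t) + (-2 * I) * t + J := by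
    intro t
    have hexpand : ∫ x in a..b, (g x - t) ^ 2 = (b - a) * (t * t) + (-2 * I) * t + J := by
      have hsq : ∀ x, (g x - t) ^ 2 = g x ^ 2 - 2 * t * g x + t * t := fun x => by ring
      simp_rw [hsq]
      rw [intervalIntegral.integral_add (hg2.sub (hg.const_mul _)) intervalIntegrable_const,
        intervalIntegral.integral_sub hg2 (hg.const_mul _), intervalIntegral.integral_const_mul,
        intervalIntegral.integral_const, smul_eq_mul]
      ring
    exact hexpand ▸ intervalIntegral.integral_nonneg hab fun x _ => sq_nonneg _
  have hdiscrim := discrim_le_zero hquad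
  rw [discrim] at hdiscrim
  linear_combination hdiscrim / 4

section Clamped

variable {E : Type*} [NormedAddCommGroup E] [NormedSpace ℝ E] [CompleteSpace E]

theorem norm_sub_sq_le_mul_integral {f f' : ℝ → E} {a b : ℝ} (hab : a ≤ b)
    (hf : ∀ x ∈ Icc a b, HasDerivWithinAt f (f' x) (Icc a b) x)
    (hf' : ContinuousOn f' (Icc a b)) :
    ‖f b - f a‖ ^ 2 ≤ (b - a) * ∫ x in a..b, ‖f' x‖ ^ 2 := by
  have hftc : ∫ x in a..b, f' x = f b - f a :=
    intervalIntegral.integral_eq_sub_of_hasDerivAt_of_le hab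
      (fun x hx => (hf x hx).continuousWithinAt)
      (fun x hx => (hf x (Ioo_subset_Icc_self hx)).hasDerivAt (Icc_mem_nhds hx.1 hx.2))
      (hf'.intervalIntegrable_of_Icc hab)
  rw [← hftc]
  calc ‖∫ x in a..b, f' x‖ ^ 2 ≤ (∫ x in a..b, ‖f' x‖) ^ 2 := by
        gcongr; exact intervalIntegral.norm_integral_le_integral_norm hab
    _ ≤ (b - a) * ∫ x in a..b, ‖f' x‖ ^ 2 :=
        sq_intervalIntegral_le_mul hab (hf'.norm.intervalIntegrable_of_Icc hab)
          ((hf'.norm.pow 2).intervalIntegrable_of_Icc hab)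

theorem integral_norm_sq_le_of_clamped_left {f f' f'' : ℝ → E} {a b : ℝ} (hab : a ≤ b)
    (hf : ∀ x ∈ Icc a b, HasDerivWithinAt f (f' x) (Icc a b) x)
    (hf' : ∀ x ∈ Icc a b, HasDerivWithinAt f' (f'' x) (Icc a b) x)
    (hf'' : ContinuousOn f'' (Icc a b)) (ha : f a = 0) (ha' : f' a = 0) :
    ∫ x in a..b, ‖f x‖ ^ 2 ≤ (b - a) ^ 4 / 8 * ∫ x in a..b, ‖f'' x‖ ^ 2 := by
  set L := ∫ x in a..b, ‖f'' x‖ ^ 2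
  have hrestrict : ∀ {g g' : ℝ → E}, (∀ x ∈ Icc a b, HasDerivWithinAt g (g' x) (Icc a b) x) →
      ∀ s ∈ Icc a b, ∀ x ∈ Icc a s, HasDerivWithinAt g (g' x) (Icc a s) x :=
    fun hg s hs x hx => (hg x ⟨hx.1, hx.2.trans hs.2⟩).mono (Icc_subset_Icc_right hs.2)
  have hfc : ContinuousOn f (Icc a b) := fun x hx => (hf x hx).continuousWithinAt
  have hf'c : ContinuousOn f' (Icc a b) := fun x hx => (hf' x hx).continuousWithinAt
  have hbound' : ∀ s ∈ Icc a b, ‖f' s‖ ^ 2 ≤ (s - a) * L := by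
    intro s hs
    calc ‖f' s‖ ^ 2 = ‖f' s - f' a‖ ^ 2 := by rw [ha', sub_zero]
      _ ≤ (s - a) * ∫ x in a..s, ‖f'' x‖ ^ 2 :=
          norm_sub_sq_le_mul_integral hs.1 (hrestrict hf' s hs)
            (hf''.mono (Icc_subset_Icc_right hs.2))
      _ ≤ (s - a) * L := by
          gcongr
          · exact sub_nonneg.2 hs.1
          · exact intervalIntegral.integral_mono_interval le_rfl hs.1 hs.2
              (ae_of_all _ fun _ => sq_nonneg _)
              ((hf''.norm.pow 2).intervalIntegrable_of_Icc hab)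
  have hbound : ∀ z ∈ Icc a b, ‖f z‖ ^ 2 ≤ (z - a) ^ 3 / 2 * L := by
    intro z hz
    calc ‖f z‖ ^ 2 = ‖f z - f a‖ ^ 2 := by rw [ha, sub_zero]
      _ ≤ (z - a) * ∫ x in a..z, ‖f' x‖ ^ 2 :=
          norm_sub_sq_le_mul_integral hz.1 (hrestrict hf z hz)
            (hf'c.mono (Icc_subset_Icc_right hz.2))
      _ ≤ (z - a) * ∫ x in a..z, (x - a) * L := by
          gcongr
          · exact sub_nonneg.2 hz.1
          · exact intervalIntegral.integral_mono_on hz.1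
              (((hf'c.mono (Icc_subset_Icc_right hz.2)).norm.pow 2).intervalIntegrable_of_Icc hz.1)
              ((by fun_prop : Continuous fun x => (x - a) * L).intervalIntegrable _ _)
              fun x hx => hbound' x ⟨hx.1, hx.2.trans hz.2⟩
      _ = (z - a) ^ 3 / 2 * L := by
          rw [intervalIntegral.integral_comp_sub_right fun x => x * L,
            intervalIntegral.integral_mul_const, integral_id]
          ring
  calc ∫ x in a..b, ‖f x‖ ^ 2 ≤ ∫ x in a..b, (x - a) ^ 3 / 2 * L :=
        intervalIntegral.integral_mono_on hab ((hfc.norm.pow 2).intervalIntegrable_of_Icc hab)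
          ((by fun_prop : Continuous fun x => (x - a) ^ 3 / 2 * L).intervalIntegrable _ _) hbound
    _ = (b - a) ^ 4 / 8 * L := by
        rw [intervalIntegral.integral_comp_sub_right fun x => x ^ 3 / 2 * L,
          intervalIntegral.integral_mul_const, intervalIntegral.integral_div, integral_pow]
        ring

theorem integral_norm_sq_le_of_clamped_right {f f' f'' : ℝ → E} {a b : ℝ} (hab : a ≤ b)
    (hf : ∀ x ∈ Icc a b, HasDerivWithinAt f (f' x) (Icc a b) x)
    (hf' : ∀ x ∈ Icc a b, HasDerivWithinAt f' (f'' x) (Icc a b) x)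
    (hf'' : ContinuousOn f'' (Icc a b)) (hb : f b = 0) (hb' : f' b = 0) :
    ∫ x in a..b, ‖f x‖ ^ 2 ≤ (b - a) ^ 4 / 8 * ∫ x in a..b, ‖f'' x‖ ^ 2 := by
  have hmaps : MapsTo (fun x => a + b - x) (Icc a b) (Icc a b) :=
    fun x hx => ⟨by linarith [hx.2], by linarith [hx.1]⟩
  have hreflect : ∀ {g g' : ℝ → E}, (∀ x ∈ Icc a b, HasDerivWithinAt g (g' x) (Icc a b) x) →
      ∀ x ∈ Icc a b, HasDerivWithinAt (fun x => g (a + b - x)) (-g' (a + b - x)) (Icc a b) x := by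
    intro g g' hg x hx
    simpa [Function.comp_def] using
      (hg _ (hmaps hx)).scomp x ((hasDerivWithinAt_id x _).const_sub (a + b)) hmaps
  have h := integral_norm_sq_le_of_clamped_left hab (hreflect hf)
    (fun x hx => by simpa [Pi.neg_def] using (hreflect hf' x hx).neg)
    (hf''.comp (by fun_prop) hmaps) (by simpa using hb) (by simpa using hb')
  simpa [intervalIntegral.integral_comp_sub_left (fun x => ‖f x‖ ^ 2) (a + b),
    intervalIntegral.integral_comp_sub_left (fun x => ‖f'' x‖ ^ 2) (a + b)] using h

end Clamped

noncomputable def quadFormIntegrand (Re k : ℝ) (σ : ℝ → ℝ) (w w' w'' θ θ' : ℝ → ℂ) (z : ℝ) :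
    ℝ :=
  (1/Re) * (k^2 * ‖w z‖^2 + 2 * ‖w' z‖^2 + (1/k^2) * ‖w'' z‖^2)
    + 2 * σ z * (w z * starRingEnd ℂ (θ z)).re
    + k^2 * ‖θ z‖^2 + ‖θ' z‖^2

section QuadFormIntegrand

variable {Re k γ : ℝ} {σ : ℝ → ℝ} {w w' w'' θ θ' : ℝ → ℂ}

theorem quadFormIntegrand_nonneg {z : ℝ} (hRe : 0 ≤ Re) (hσ : σ z = 0) :
    0 ≤ quadFormIntegrand Re k σ w w' w'' θ θ' z := by
  rw [quadFormIntegrand, hσ, mul_zero, zero_mul, add_zero]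
  have := mul_nonneg (one_div_nonneg.2 hRe)
    (by positivity : 0 ≤ k^2 * ‖w z‖^2 + 2 * ‖w' z‖^2 + (1/k^2) * ‖w'' z‖^2)
  exact add_nonneg (add_nonneg this (by positivity)) (by positivity)

theorem sub_le_quadFormIntegrand {z : ℝ} (hRe : 0 ≤ Re) (hk : k ≠ 0) (hσ : |σ z| ≤ γ) :
    1 / (Re * k ^ 2) * ‖w'' z‖ ^ 2 - (γ / k) ^ 2 * ‖w z‖ ^ 2 ≤
      quadFormIntegrand Re k σ w w' w'' θ θ' z := by
  have hcross : -(2 * γ * (‖w z‖ * ‖θ z‖)) ≤ 2 * σ z * (w z * starRingEnd ℂ (θ z)).re := by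
    have hre : |(w z * starRingEnd ℂ (θ z)).re| ≤ ‖w z‖ * ‖θ z‖ := by
      simpa using Complex.abs_re_le_norm (w z * starRingEnd ℂ (θ z))
    have hγ : 0 ≤ γ := (abs_nonneg _).trans hσ
    have : |2 * σ z * (w z * starRingEnd ℂ (θ z)).re| ≤ 2 * γ * (‖w z‖ * ‖θ z‖) := by
      rw [abs_mul, abs_mul, abs_two]
      gcongr
    exact neg_le_of_abs_le this
  have hyoung : 2 * γ * (‖w z‖ * ‖θ z‖) ≤ (γ / k) ^ 2 * ‖w z‖ ^ 2 + k ^ 2 * ‖θ z‖ ^ 2 := by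
    have hexpand : (γ / k * ‖w z‖ - k * ‖θ z‖) ^ 2 = (γ / k) ^ 2 * ‖w z‖ ^ 2
        + k ^ 2 * ‖θ z‖ ^ 2 - 2 * (γ / k * k) * (‖w z‖ * ‖θ z‖) := by ring
    rw [div_mul_cancel₀ γ hk] at hexpand
    linarith [sq_nonneg (γ / k * ‖w z‖ - k * ‖θ z‖)]
  have : 0 ≤ 1 / Re * (k ^ 2 * ‖w z‖ ^ 2 + 2 * ‖w' z‖ ^ 2) :=
    mul_nonneg (one_div_nonneg.2 hRe) (by positivity)
  rw [quadFormIntegrand]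
  linear_combination this + hcross + hyoung + sq_nonneg ‖θ' z‖

theorem intervalIntegrable_quadFormIntegrand {a b : ℝ} (hσ : Measurable σ)
    (hσγ : ∀ z, |σ z| ≤ γ) (hw : ContinuousOn w (uIcc a b)) (hw' : ContinuousOn w' (uIcc a b))
    (hw'' : ContinuousOn w'' (uIcc a b)) (hθ : ContinuousOn θ (uIcc a b))
    (hθ' : ContinuousOn θ' (uIcc a b)) :
    IntervalIntegrable (quadFormIntegrand Re k σ w w' w'' θ θ') volume a b := by
  have hcross : IntervalIntegrable (fun z => 2 * σ z * (w z * starRingEnd ℂ (θ z)).re)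
      volume a b := by
    have hc : IntervalIntegrable (fun z => (w z * starRingEnd ℂ (θ z)).re) volume a b :=
      (Complex.continuous_re.comp_continuousOn
        (hw.mul (Complex.continuous_conj.comp_continuousOn hθ))).intervalIntegrable
    refine intervalIntegrable_iff.2 ((intervalIntegrable_iff.1 hc).bdd_mul (c := 2 * γ)
      (measurable_const.mul hσ).aestronglyMeasurable (ae_of_all _ fun z => ?_))
    rw [norm_mul, Real.norm_two, Real.norm_eq_abs]
    exact mul_le_mul_of_nonneg_left (hσγ z) zero_le_two
  refine ((ContinuousOn.intervalIntegrable ?_).add hcross |>.add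
    (ContinuousOn.intervalIntegrable ?_)).add (ContinuousOn.intervalIntegrable ?_) <;> fun_prop

theorem integral_quadFormIntegrand_nonneg_of_eqOn_zero {a b : ℝ} (hab : a ≤ b) (hRe : 0 ≤ Re)
    (hσ : EqOn σ 0 (Ioo a b)) : 0 ≤ ∫ z in a..b, quadFormIntegrand Re k σ w w' w'' θ θ' z := by
  rw [intervalIntegral.integral_of_le hab, integral_Ioc_eq_integral_Ioo]
  exact setIntegral_nonneg measurableSet_Ioo fun z hz => quadFormIntegrand_nonneg hRe (hσ hz)

theorem integral_quadFormIntegrand_nonneg_of_layer {a b : ℝ} (hab : a ≤ b) (hRe : 0 < Re)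
    (hk : k ≠ 0) (hlayer : γ ^ 2 * (b - a) ^ 4 ≤ 8 / Re) (hσγ : ∀ z ∈ Icc a b, |σ z| ≤ γ)
    (hint : IntervalIntegrable (quadFormIntegrand Re k σ w w' w'' θ θ') volume a b)
    (hw : ContinuousOn w (Icc a b)) (hw'' : ContinuousOn w'' (Icc a b))
    (hpoincare : ∫ z in a..b, ‖w z‖ ^ 2 ≤ (b - a) ^ 4 / 8 * ∫ z in a..b, ‖w'' z‖ ^ 2) :
    0 ≤ ∫ z in a..b, quadFormIntegrand Re k σ w w' w'' θ θ' z := by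
  set W := ∫ z in a..b, ‖w'' z‖ ^ 2
  have hW : 0 ≤ W := intervalIntegral.integral_nonneg hab fun _ _ => sq_nonneg _
  have hW2 : IntervalIntegrable (fun z => ‖w'' z‖ ^ 2) volume a b :=
    (hw''.norm.pow 2).intervalIntegrable_of_Icc hab
  have hV2 : IntervalIntegrable (fun z => ‖w z‖ ^ 2) volume a b :=
    (hw.norm.pow 2).intervalIntegrable_of_Icc hab
  have hgap : 0 ≤ 1 / Re - γ ^ 2 * (b - a) ^ 4 / 8 := by
    have : 8 / Re = 8 * (1 / Re) := by ring
    linarith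
  calc 0 ≤ 1 / k ^ 2 * ((1 / Re - γ ^ 2 * (b - a) ^ 4 / 8) * W) := by positivity
    _ ≤ 1 / (Re * k ^ 2) * W - (γ / k) ^ 2 * ∫ z in a..b, ‖w z‖ ^ 2 := by
        linear_combination mul_le_mul_of_nonneg_left hpoincare (sq_nonneg (γ / k))
    _ = ∫ z in a..b, (1 / (Re * k ^ 2) * ‖w'' z‖ ^ 2 - (γ / k) ^ 2 * ‖w z‖ ^ 2) := by
        rw [intervalIntegral.integral_sub (hW2.const_mul _) (hV2.const_mul _),
          intervalIntegral.integral_const_mul, intervalIntegral.integral_const_mul]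
    _ ≤ ∫ z in a..b, quadFormIntegrand Re k σ w w' w'' θ θ' z :=
        intervalIntegral.integral_mono_on hab ((hW2.const_mul _).sub (hV2.const_mul _)) hint
          fun z hz => sub_le_quadFormIntegrand hRe.le hk (hσγ z hz)

end QuadFormIntegrand

noncomputable def layerSlope (δ γ z : ℝ) : ℝ := if z ≤ δ ∨ 1 - δ ≤ z then -γ else 0

theorem measurable_layerSlope (δ γ : ℝ) : Measurable (layerSlope δ γ) :=
  Measurable.ite (measurableSet_Iic.union measurableSet_Ici) measurable_const measurable_const

theorem abs_layerSlope_le {γ : ℝ} (δ : ℝ) (hγ : 0 ≤ γ) (z : ℝ) : |layerSlope δ γ z| ≤ γ := by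
  unfold layerSlope
  split_ifs <;> simp [abs_of_nonneg hγ, hγ]

theorem layerSlope_eqOn_zero (δ γ : ℝ) : EqOn (layerSlope δ γ) 0 (Ioo δ (1 - δ)) :=
  fun _ hz => if_neg (by rintro (h | h) <;> linarith [hz.1, hz.2])

theorem integral_quadFormIntegrand_layerSlope_nonneg {δ γ Re k : ℝ} (hδ0 : 0 ≤ δ)
    (hδ2 : δ ≤ 1 / 2) (hγ : 0 ≤ γ) (hRe : 0 < Re) (hk : k ≠ 0)
    (hconstr : γ ^ 2 * δ ^ 4 ≤ 8 / Re) {w w' w'' θ θ' : ℝ → ℂ}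
    (hw : ∀ z ∈ Icc (0:ℝ) 1, HasDerivWithinAt w (w' z) (Icc 0 1) z)
    (hw' : ∀ z ∈ Icc (0:ℝ) 1, HasDerivWithinAt w' (w'' z) (Icc 0 1) z)
    (hw'' : ContinuousOn w'' (Icc 0 1)) (hθ : ContinuousOn θ (Icc 0 1))
    (hθ' : ContinuousOn θ' (Icc 0 1)) (hw0 : w 0 = 0) (hw1 : w 1 = 0) (hw'0 : w' 0 = 0)
    (hw'1 : w' 1 = 0) :
    0 ≤ ∫ z in (0:ℝ)..1, quadFormIntegrand Re k (layerSlope δ γ) w w' w'' θ θ' z := by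
  have h01 : uIcc (0:ℝ) 1 = Icc 0 1 := uIcc_of_le zero_le_one
  have hwc : ContinuousOn w (Icc 0 1) := fun z hz => (hw z hz).continuousWithinAt
  have hw'c : ContinuousOn w' (Icc 0 1) := fun z hz => (hw' z hz).continuousWithinAt
  have hint : ∀ c ∈ Icc (0:ℝ) 1, ∀ d ∈ Icc (0:ℝ) 1, IntervalIntegrable
      (quadFormIntegrand Re k (layerSlope δ γ) w w' w'' θ θ') volume c d := fun c hc d hd =>
    (intervalIntegrable_quadFormIntegrand (measurable_layerSlope δ γ) (abs_layerSlope_le δ hγ)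
      (h01 ▸ hwc) (h01 ▸ hw'c) (h01 ▸ hw'') (h01 ▸ hθ) (h01 ▸ hθ')).mono_set
      (uIcc_subset_uIcc (h01 ▸ hc) (h01 ▸ hd))
  have hrestrict : ∀ {t : Set ℝ} {f f' : ℝ → ℂ}, t ⊆ Icc 0 1 →
      (∀ x ∈ Icc (0:ℝ) 1, HasDerivWithinAt f (f' x) (Icc 0 1) x) →
      ∀ x ∈ t, HasDerivWithinAt f (f' x) t x := fun ht hf x hx => (hf x (ht hx)).mono ht
  have hlower : Icc 0 δ ⊆ Icc (0:ℝ) 1 := Icc_subset_Icc_right (by linarith)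
  have hupper : Icc (1 - δ) 1 ⊆ Icc (0:ℝ) 1 := Icc_subset_Icc_left (by linarith)
  have h0 : (0:ℝ) ∈ Icc (0:ℝ) 1 := left_mem_Icc.2 zero_le_one
  have h1 : (1:ℝ) ∈ Icc (0:ℝ) 1 := right_mem_Icc.2 zero_le_one
  have hδ : δ ∈ Icc (0:ℝ) 1 := ⟨hδ0, by linarith⟩
  have h1δ : 1 - δ ∈ Icc (0:ℝ) 1 := ⟨by linarith, by linarith⟩
  rw [← intervalIntegral.integral_add_adjacent_intervals (hint 0 h0 _ h1δ) (hint _ h1δ 1 h1),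
    ← intervalIntegral.integral_add_adjacent_intervals (hint 0 h0 _ hδ) (hint _ hδ _ h1δ)]
  refine add_nonneg (add_nonneg ?_ ?_) ?_
  · refine integral_quadFormIntegrand_nonneg_of_layer hδ0 hRe hk (by rwa [sub_zero])
      (fun z _ => abs_layerSlope_le δ hγ z) (hint 0 h0 _ hδ) (hwc.mono hlower)
      (hw''.mono hlower) ?_
    exact integral_norm_sq_le_of_clamped_left hδ0 (hrestrict hlower hw)
      (hrestrict hlower hw') (hw''.mono hlower) hw0 hw'0
  · exact integral_quadFormIntegrand_nonneg_of_eqOn_zero (by linarith) hRe.le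
      (layerSlope_eqOn_zero δ γ)
  · refine integral_quadFormIntegrand_nonneg_of_layer (by linarith) hRe hk
      (by rwa [sub_sub_cancel]) (fun z _ => abs_layerSlope_le δ hγ z) (hint _ h1δ 1 h1)
      (hwc.mono hupper) (hw''.mono hupper) ?_
    exact integral_norm_sq_le_of_clamped_right (by linarith : 1 - δ ≤ 1)
      (hrestrict hupper hw) (hrestrict hupper hw') (hw''.mono hupper) hw1 hw'1

/-- Sufficiency of the spectral-constraint condition γ²δ⁴ ≤ 8/R_e: for the
piecewise-constant slope σ of the piecewise linear background, the per-mode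
quadratic form is nonnegative on all fields w, θ with w = w' = 0 at z = 0,1. -/
theorem stmt_9 (δ γ Re k : ℝ) (hδ0 : 0 < δ) (hδ2 : δ ≤ 1/2)
    (hγ : 0 < γ) (hRe : 0 < Re) (hk : 0 < k)
    (hconstr : γ^2 * δ^4 ≤ 8 / Re)
    (σ : ℝ → ℝ)
    (hσ : ∀ z ∈ Set.Icc (0:ℝ) 1, σ z = if z ≤ δ ∨ 1 - δ ≤ z then -γ else 0)
    (w w' w'' θ θ' : ℝ → ℂ)
    (hw : ∀ z ∈ Set.Icc (0:ℝ) 1, HasDerivWithinAt w (w' z) (Set.Icc 0 1) z)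
    (hw' : ∀ z ∈ Set.Icc (0:ℝ) 1, HasDerivWithinAt w' (w'' z) (Set.Icc 0 1) z)
    (hw''c : ContinuousOn w'' (Set.Icc 0 1))
    (hθ : ∀ z ∈ Set.Icc (0:ℝ) 1, HasDerivWithinAt θ (θ' z) (Set.Icc 0 1) z)
    (hθ'c : ContinuousOn θ' (Set.Icc 0 1))
    (hw0 : w 0 = 0) (hw1 : w 1 = 0) (hw'0 : w' 0 = 0) (hw'1 : w' 1 = 0) :
    0 ≤ ∫ z in (0:ℝ)..1,
      ((1/Re) * (k^2 * ‖w z‖^2 + 2 * ‖w' z‖^2 + (1/k^2) * ‖w'' z‖^2)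
        + 2 * σ z * (w z * starRingEnd ℂ (θ z)).re
        + k^2 * ‖θ z‖^2 + ‖θ' z‖^2) := by
  -- `σ` is prescribed only on `[0, 1]`, where it agrees with the measurable `layerSlope δ γ`.
  have hσ_eq : EqOn (quadFormIntegrand Re k σ w w' w'' θ θ')
      (quadFormIntegrand Re k (layerSlope δ γ) w w' w'' θ θ') (uIcc 0 1) := fun z hz => by
    rw [uIcc_of_le zero_le_one] at hz
    simp only [quadFormIntegrand, hσ z hz, layerSlope]
  change 0 ≤ ∫ z in (0:ℝ)..1, quadFormIntegrand Re k σ w w' w'' θ θ' z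
  rw [intervalIntegral.integral_congr hσ_eq]
  exact integral_quadFormIntegrand_layerSlope_nonneg hδ0.le hδ2 hγ.le hRe hk.ne' hconstr hw hw' hw''c
    (fun z hz => (hθ z hz).continuousWithinAt) hθ'c hw0 hw1 hw'0 hw'1
end

section
/- Let w, θ be complex-valued functions on [0, 1/2], with w twice continuously differentiable, θ continuously differentiable, w(0) = 0 and w'(0) = 0. Then for every z ∈ [0, 1/2] and all real a₁ > 0, a₂ > 0, k > 0: |w(z)·conj(θ(z))| ≤ (z/(2√2))·[ a₁·∫₀^{1/2} |w'|² + (1/a₁)·∫₀^{1/2} |θ'|² + (a₂/k²)·∫₀^{1/2} |w''|² + (k²/a₂)·∫₀^{1/2} |θ|² ]. -/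
/-!
Since `w 0 = 0`, the product `w · conj θ` is the integral over `[0, z]` of
`w' · conj θ + w · conj θ'`. Cauchy–Schwarz gives `|w ζ|² ≤ ζ ∫ |w'|²` and `|w' ζ|² ≤ ζ ∫ |w''|²`;
a second Cauchy–Schwarz, with `∫₀^z ζ dζ = z² / 2`, bounds `∫₀^z |w'| |θ|` by
`(z / √2) (∫ |w''|²)^½ (∫ |θ|²)^½`, and Young's inequality with weight `a₂ / k²` splits the
product (likewise for `∫₀^z |w| |θ'|` with weight `a₁`).
-/

open Set intervalIntegral
open MeasureTheory (volume)

theorem sq_integral_mul_le_integral_sq_mul_integral_sq {f g : ℝ → ℝ} {a b : ℝ} (hab : a ≤ b)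
    (hf : IntervalIntegrable (fun x => f x ^ 2) volume a b)
    (hg : IntervalIntegrable (fun x => g x ^ 2) volume a b)
    (hfg : IntervalIntegrable (fun x => f x * g x) volume a b) :
    (∫ x in a..b, f x * g x) ^ 2 ≤ (∫ x in a..b, f x ^ 2) * ∫ x in a..b, g x ^ 2 := by
  -- `t ↦ ∫ (t g + f)²` is a nonnegative quadratic polynomial, so its discriminant is `≤ 0`.
  have hquad : ∀ t : ℝ, 0 ≤ (∫ x in a..b, g x ^ 2) * (t * t)
      + 2 * (∫ x in a..b, f x * g x) * t + ∫ x in a..b, f x ^ 2 := fun t => calc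
    0 ≤ ∫ x in a..b, (t * g x + f x) ^ 2 := integral_nonneg hab fun x _ => sq_nonneg _
    _ = ∫ x in a..b, (t * t * g x ^ 2 + 2 * t * (f x * g x) + f x ^ 2) := by
        congr 1; ext x; ring
    _ = _ := by
        rw [integral_add ((hg.const_mul _).add (hfg.const_mul _)) hf,
          integral_add (hg.const_mul _) (hfg.const_mul _), integral_const_mul, integral_const_mul]
        ring
  have hdisc := discrim_le_zero hquad
  rw [discrim] at hdisc
  linarith

theorem integral_sq_le_integral_sq_of_mem_Icc {f : ℝ → ℝ} {a b c : ℝ} (hc : c ∈ Icc a b)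
    (hf : ContinuousOn f (Icc a b)) : ∫ x in a..c, f x ^ 2 ≤ ∫ x in a..b, f x ^ 2 :=
  integral_mono_interval le_rfl hc.1 hc.2 (Filter.Eventually.of_forall fun _ => sq_nonneg _)
    ((hf.pow 2).intervalIntegrable_of_Icc (hc.1.trans hc.2))

section Calculus

variable {E : Type*} [NormedAddCommGroup E] [NormedSpace ℝ E] [CompleteSpace E]

theorem integral_eq_sub_of_hasDerivWithinAt_Icc {g g' : ℝ → E} {a b c : ℝ}
    (hg : ∀ x ∈ Icc a b, HasDerivWithinAt g (g' x) (Icc a b) x)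
    (hg' : ContinuousOn g' (Icc a b)) (hc : c ∈ Icc a b) :
    ∫ x in a..c, g' x = g c - g a := by
  have hsub : Icc a c ⊆ Icc a b := Icc_subset_Icc le_rfl hc.2
  refine integral_eq_sub_of_hasDeriv_right_of_le hc.1
    (fun x hx => (hg x (hsub hx)).continuousWithinAt.mono hsub) (fun x hx => ?_)
    ((hg'.mono hsub).intervalIntegrable_of_Icc hc.1)
  exact (hg x (hsub (Ioo_subset_Icc_self hx))).mono_of_mem_nhdsWithin
    (Icc_mem_nhdsGT_of_mem ⟨hx.1.le, hx.2.trans_le hc.2⟩)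

theorem norm_sq_le_mul_integral_norm_deriv_sq {g g' : ℝ → E} {b ζ : ℝ}
    (hg : ∀ x ∈ Icc 0 b, HasDerivWithinAt g (g' x) (Icc 0 b) x)
    (hg' : ContinuousOn g' (Icc 0 b)) (hg0 : g 0 = 0) (hζ : ζ ∈ Icc 0 b) :
    ‖g ζ‖ ^ 2 ≤ ζ * ∫ x in 0..b, ‖g' x‖ ^ 2 := by
  have hftc : g ζ = ∫ x in 0..ζ, g' x := by
    rw [integral_eq_sub_of_hasDerivWithinAt_Icc hg hg' hζ, hg0, sub_zero]
  have hnorm : ContinuousOn (fun x => ‖g' x‖) (Icc 0 ζ) :=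
    (hg'.mono (Icc_subset_Icc le_rfl hζ.2)).norm
  have hcs := sq_integral_mul_le_integral_sq_mul_integral_sq hζ.1
    ((hnorm.pow 2).intervalIntegrable_of_Icc hζ.1) intervalIntegrable_const
    ((hnorm.mul continuousOn_const).intervalIntegrable_of_Icc hζ.1) (g := fun _ => 1)
  simp only [mul_one, one_pow, integral_const, sub_zero, smul_eq_mul] at hcs
  calc ‖g ζ‖ ^ 2 ≤ (∫ x in 0..ζ, ‖g' x‖) ^ 2 := by
        rw [hftc]
        gcongr
        exact norm_integral_le_integral_norm hζ.1
    _ ≤ ζ * ∫ x in 0..ζ, ‖g' x‖ ^ 2 := by linarith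
    _ ≤ ζ * ∫ x in 0..b, ‖g' x‖ ^ 2 :=
        mul_le_mul_of_nonneg_left (integral_sq_le_integral_sq_of_mem_Icc hζ hg'.norm) hζ.1

end Calculus

theorem integral_mul_le_of_sq_le_mul {p q : ℝ → ℝ} {z P Q c : ℝ} (hz : 0 ≤ z) (hc : 0 < c)
    (hp : ContinuousOn p (Icc 0 z)) (hq : ContinuousOn q (Icc 0 z))
    (hpP : ∀ ζ ∈ Icc 0 z, p ζ ^ 2 ≤ ζ * P) (hqQ : ∫ x in 0..z, q x ^ 2 ≤ Q) :
    ∫ x in 0..z, p x * q x ≤ z / (2 * √2) * (c * P + Q / c) := by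
  rcases hz.eq_or_lt with rfl | hz
  · simp
  have hP : 0 ≤ P := nonneg_of_mul_nonneg_right ((sq_nonneg _).trans (hpP z ⟨hz.le, le_rfl⟩)) hz
  have hq2 : 0 ≤ ∫ x in 0..z, q x ^ 2 := integral_nonneg hz.le fun _ _ => sq_nonneg _
  have hp2 : ∫ x in 0..z, p x ^ 2 ≤ z ^ 2 / 2 * P := by
    calc ∫ x in 0..z, p x ^ 2 ≤ ∫ x in 0..z, x * P :=
          integral_mono_on hz.le ((hp.pow 2).intervalIntegrable_of_Icc hz.le)
            (intervalIntegrable_id.mul_const _) hpP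
      _ = z ^ 2 / 2 * P := by rw [integral_mul_const, integral_id]; ring
  have hcs := sq_integral_mul_le_integral_sq_mul_integral_sq hz.le
    ((hp.pow 2).intervalIntegrable_of_Icc hz.le) ((hq.pow 2).intervalIntegrable_of_Icc hz.le)
    ((hp.mul hq).intervalIntegrable_of_Icc hz.le)
  have hsqrt2 : √2 ^ 2 = 2 := Real.sq_sqrt zero_le_two
  have hrhs : 0 ≤ z / (2 * √2) * (c * P + Q / c) := by
    have : 0 ≤ Q := hq2.trans hqQ
    positivity
  have hyoung : 4 * (P * Q) ≤ (c * P + Q / c) ^ 2 := by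
    have hcPQ : c * P * (Q / c) = P * Q := by field_simp
    nlinarith [sq_nonneg (c * P - Q / c)]
  refine le_trans (le_abs_self _) (abs_le_of_sq_le_sq ?_ hrhs)
  calc (∫ x in 0..z, p x * q x) ^ 2 ≤ (∫ x in 0..z, p x ^ 2) * ∫ x in 0..z, q x ^ 2 := hcs
    _ ≤ (z ^ 2 / 2 * P) * Q := mul_le_mul hp2 hqQ hq2 (by positivity)
    _ ≤ z ^ 2 / 8 * (c * P + Q / c) ^ 2 := by nlinarith [sq_nonneg z]
    _ = (z / (2 * √2) * (c * P + Q / c)) ^ 2 := by rw [mul_pow, div_pow, mul_pow, hsqrt2]; ring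

theorem norm_mul_conj_le_integral {𝕜 : Type*} [RCLike 𝕜] {w w' θ θ' : ℝ → 𝕜} {b z : ℝ}
    (hw : ∀ x ∈ Icc 0 b, HasDerivWithinAt w (w' x) (Icc 0 b) x)
    (hθ : ∀ x ∈ Icc 0 b, HasDerivWithinAt θ (θ' x) (Icc 0 b) x)
    (hw'c : ContinuousOn w' (Icc 0 b)) (hθ'c : ContinuousOn θ' (Icc 0 b))
    (hw0 : w 0 = 0) (hz : z ∈ Icc 0 b) :
    ‖w z * starRingEnd 𝕜 (θ z)‖ ≤
      (∫ x in 0..z, ‖w' x‖ * ‖θ x‖) + ∫ x in 0..z, ‖w x‖ * ‖θ' x‖ := by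
  have hwc : ContinuousOn w (Icc 0 b) := fun x hx => (hw x hx).continuousWithinAt
  have hθc : ContinuousOn θ (Icc 0 b) := fun x hx => (hθ x hx).continuousWithinAt
  have hsub : Icc 0 z ⊆ Icc 0 b := Icc_subset_Icc le_rfl hz.2
  have hprod : ∀ x ∈ Icc 0 b, HasDerivWithinAt (fun y => w y * starRingEnd 𝕜 (θ y))
      (w' x * starRingEnd 𝕜 (θ x) + w x * starRingEnd 𝕜 (θ' x)) (Icc 0 b) x :=
    fun x hx => (hw x hx).mul (hθ x hx).star
  have hprod'c := (hw'c.mul hθc.star).add (hwc.mul hθ'c.star)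
  have hftc := integral_eq_sub_of_hasDerivWithinAt_Icc hprod hprod'c hz
  simp only [hw0, zero_mul, sub_zero] at hftc
  have hint : ∀ {u v : ℝ → 𝕜}, ContinuousOn u (Icc 0 b) → ContinuousOn v (Icc 0 b) →
      IntervalIntegrable (fun x => ‖u x‖ * ‖v x‖) volume 0 z := fun hu hv =>
    ((hu.norm.mul hv.norm).mono hsub).intervalIntegrable_of_Icc hz.1
  calc ‖w z * starRingEnd 𝕜 (θ z)‖
      = ‖∫ x in 0..z, (w' x * starRingEnd 𝕜 (θ x) + w x * starRingEnd 𝕜 (θ' x))‖ := by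
        rw [hftc]
    _ ≤ ∫ x in 0..z, ‖w' x * starRingEnd 𝕜 (θ x) + w x * starRingEnd 𝕜 (θ' x)‖ :=
        norm_integral_le_integral_norm hz.1
    _ ≤ ∫ x in 0..z, (‖w' x‖ * ‖θ x‖ + ‖w x‖ * ‖θ' x‖) := by
        refine integral_mono_on hz.1 ((hprod'c.norm.mono hsub).intervalIntegrable_of_Icc hz.1)
          ((hint hw'c hθc).add (hint hwc hθ'c)) fun x _ => ?_
        simpa only [norm_mul, RCLike.norm_conj] using
          norm_add_le (w' x * starRingEnd 𝕜 (θ x)) (w x * starRingEnd 𝕜 (θ' x))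
    _ = _ := integral_add (hint hw'c hθc) (hint hwc hθ'c)

/-- Pointwise Cauchy–Schwarz/Young estimate on [0,1/2]: for w twice continuously
differentiable and θ continuously differentiable with w(0) = w'(0) = 0,
|w(z)·conj(θ(z))| ≤ (z/(2√2))[a₁∫|w'|² + (1/a₁)∫|θ'|² + (a₂/k²)∫|w''|² + (k²/a₂)∫|θ|²]. -/
theorem stmt_10 (w w' w'' θ θ' : ℝ → ℂ)
    (hw : ∀ z ∈ Set.Icc (0:ℝ) (1/2), HasDerivWithinAt w (w' z) (Set.Icc 0 (1/2)) z)
    (hw' : ∀ z ∈ Set.Icc (0:ℝ) (1/2), HasDerivWithinAt w' (w'' z) (Set.Icc 0 (1/2)) z)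
    (hw''c : ContinuousOn w'' (Set.Icc 0 (1/2)))
    (hθ : ∀ z ∈ Set.Icc (0:ℝ) (1/2), HasDerivWithinAt θ (θ' z) (Set.Icc 0 (1/2)) z)
    (hθ'c : ContinuousOn θ' (Set.Icc 0 (1/2)))
    (hw0 : w 0 = 0) (hw'0 : w' 0 = 0)
    (z : ℝ) (hz : z ∈ Set.Icc (0:ℝ) (1/2))
    (a₁ a₂ k : ℝ) (ha₁ : 0 < a₁) (ha₂ : 0 < a₂) (hk : 0 < k) :
    ‖w z * starRingEnd ℂ (θ z)‖ ≤ (z / (2 * Real.sqrt 2)) *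
      (a₁ * (∫ ζ in (0:ℝ)..(1/2), ‖w' ζ‖^2)
        + (1/a₁) * (∫ ζ in (0:ℝ)..(1/2), ‖θ' ζ‖^2)
        + (a₂/k^2) * (∫ ζ in (0:ℝ)..(1/2), ‖w'' ζ‖^2)
        + (k^2/a₂) * (∫ ζ in (0:ℝ)..(1/2), ‖θ ζ‖^2)) := by
  have hw'c : ContinuousOn w' (Icc 0 (1/2)) := fun x hx => (hw' x hx).continuousWithinAt
  have hwc : ContinuousOn w (Icc 0 (1/2)) := fun x hx => (hw x hx).continuousWithinAt
  have hθc : ContinuousOn θ (Icc 0 (1/2)) := fun x hx => (hθ x hx).continuousWithinAt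
  have hsub : Icc 0 z ⊆ Icc 0 (1/2) := Icc_subset_Icc le_rfl hz.2
  have hw'θ := integral_mul_le_of_sq_le_mul hz.1 (div_pos ha₂ (pow_pos hk 2))
    (hw'c.norm.mono hsub) (hθc.norm.mono hsub)
    (fun ζ hζ => norm_sq_le_mul_integral_norm_deriv_sq hw' hw''c hw'0 (hsub hζ))
    (integral_sq_le_integral_sq_of_mem_Icc hz hθc.norm)
  have hwθ' := integral_mul_le_of_sq_le_mul hz.1 ha₁
    (hwc.norm.mono hsub) (hθ'c.norm.mono hsub)
    (fun ζ hζ => norm_sq_le_mul_integral_norm_deriv_sq hw hw'c hw0 (hsub hζ))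
    (integral_sq_le_integral_sq_of_mem_Icc hz hθ'c.norm)
  calc ‖w z * starRingEnd ℂ (θ z)‖
      ≤ (∫ x in 0..z, ‖w' x‖ * ‖θ x‖) + ∫ x in 0..z, ‖w x‖ * ‖θ' x‖ :=
        norm_mul_conj_le_integral hw hθ hw'c hθ'c hw0 hz
    _ ≤ _ := add_le_add hw'θ hwθ'
    _ = _ := by rw [div_div_eq_mul_div]; ring
end

section
/- Let w, θ be complex-valued functions on [0,1], with w twice continuously differentiable, θ continuously differentiable, and w(0) = w(1) = 0, w'(0) = w'(1) = 0. Then for every δ with 0 < δ ≤ 1/2 and all real p > 0, q > 0, k > 0: ∫₀^δ |w·conj(θ)| + ∫_{1−δ}^1 |w·conj(θ)| ≤ (δ²/(4√2))·[ p·∫₀¹ |w'|² + (1/p)·∫₀¹ |θ'|² + (q/k²)·∫₀¹ |w''|² + (k²/q)·∫₀¹ |θ|² ]. -/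
/-!
From `w 0 = w' 0 = 0`, the fundamental theorem of calculus and Cauchy–Schwarz give
`‖w' s‖ ≤ √s ‖w''‖₂`, hence `‖w z‖ ≤ (2/3) z^{3/2} ‖w''‖₂`, and one more Cauchy–Schwarz gives
`∫₀^δ ‖w‖‖θ‖ ≤ (δ²/3) ‖w''‖₂ ‖θ‖₂` on the layer `[0, δ]`; the reflection `z ↦ 1 - z` gives the
same on `[1 - δ, 1]`. Young's inequality `2ab ≤ t a² + b²/t` and the disjointness of the two
layers (`δ ≤ 1/2`) bound the sum by `(δ²/6)(t ‖w''‖₂² + ‖θ‖₂²/t)`, and `1/6 ≤ 1/(4√2)`.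
-/

open MeasureTheory Set intervalIntegral

theorem Real.sqrt_mul_sqrt_le_add_div_two {x y t : ℝ} (hx : 0 ≤ x) (hy : 0 ≤ y) (ht : 0 < t) :
    √x * √y ≤ (t * x + t⁻¹ * y) / 2 := by
  have hsq : t * x + t⁻¹ * y - 2 * (√x * √y) = t⁻¹ * (t * √x - √y) ^ 2 := by
    linear_combination (-t) * Real.sq_sqrt hx - t⁻¹ * Real.sq_sqrt hy
      + (2 * √x * √y - t * √x ^ 2) * mul_inv_cancel₀ ht.ne'
  linarith [mul_nonneg (inv_nonneg.2 ht.le) (sq_nonneg (t * √x - √y))]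

section BoundaryLayer

variable {E F : Type*} [NormedAddCommGroup E] [NormedAddCommGroup F]

theorem ContinuousOn.memLp_two_restrict_Ioc {f : ℝ → E} {a b : ℝ}
    (hf : ContinuousOn f (Icc a b)) : MemLp f 2 (volume.restrict (Ioc a b)) :=
  (memLp_two_iff_integrable_sq_norm
      ((hf.mono Ioc_subset_Icc_self).aestronglyMeasurable measurableSet_Ioc)).2
    (((hf.norm.pow 2).integrableOn_Icc).mono_set Ioc_subset_Icc_self)

theorem intervalIntegral.integral_norm_mul_norm_le_sqrt_mul_sqrt {f : ℝ → E} {g : ℝ → F}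
    {a b : ℝ} (hab : a ≤ b) (hf : ContinuousOn f (Icc a b)) (hg : ContinuousOn g (Icc a b)) :
    ∫ x in a..b, ‖f x‖ * ‖g x‖ ≤ √(∫ x in a..b, ‖f x‖ ^ 2) * √(∫ x in a..b, ‖g x‖ ^ 2) := by
  have holder := integral_mul_norm_le_Lp_mul_Lq Real.HolderConjugate.two_two
    (ENNReal.ofReal_ofNat 2 ▸ hf.norm.memLp_two_restrict_Ioc)
    (ENNReal.ofReal_ofNat 2 ▸ hg.norm.memLp_two_restrict_Ioc)
  simpa only [integral_of_le hab, Real.sqrt_eq_rpow, Real.rpow_two, norm_norm] using holder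

theorem intervalIntegral.integral_add_integral_le_of_nonneg {f : ℝ → ℝ} {a b c d : ℝ}
    (hab : a ≤ b) (hbc : b ≤ c) (hcd : c ≤ d) (hf0 : 0 ≤ f) (hf : IntervalIntegrable f volume a d) :
    (∫ x in a..b, f x) + ∫ x in c..d, f x ≤ ∫ x in a..d, f x := by
  have hb : b ∈ uIcc a d := mem_uIcc_of_le hab (hbc.trans hcd)
  have hbd : IntervalIntegrable f volume b d := hf.mono_set (uIcc_subset_uIcc_right hb)
  rw [← integral_add_adjacent_intervals (hf.mono_set (uIcc_subset_uIcc_left hb)) hbd]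
  gcongr
  exact integral_mono_interval hbc hcd le_rfl (ae_of_all _ hf0) hbd

theorem HasDerivWithinAt.comp_const_sub_Icc [NormedSpace ℝ E] {f f' : ℝ → E} {a b c : ℝ}
    (hf : ∀ x ∈ Icc a b, HasDerivWithinAt f (f' x) (Icc a b) x) :
    ∀ x ∈ Icc (c - b) (c - a), HasDerivWithinAt (fun x => f (c - x)) (-f' (c - x))
      (Icc (c - b) (c - a)) x := by
  have hmaps : MapsTo (c - ·) (Icc (c - b) (c - a)) (Icc a b) := fun x hx =>
    ⟨by linarith [hx.2], by linarith [hx.1]⟩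
  intro x hx
  simpa [Function.comp_def] using
    (hf _ (hmaps hx)).scomp x ((hasDerivWithinAt_id x _).const_sub c) hmaps

variable [NormedSpace ℝ E] [CompleteSpace E]

theorem intervalIntegral.integral_eq_sub_of_hasDerivWithinAt_Icc {f f' : ℝ → E} {a b : ℝ}
    (hab : a ≤ b) (hf : ∀ x ∈ Icc a b, HasDerivWithinAt f (f' x) (Icc a b) x)
    (hf' : IntervalIntegrable f' volume a b) : ∫ x in a..b, f' x = f b - f a :=
  integral_eq_sub_of_hasDeriv_right_of_le hab (fun x hx => (hf x hx).continuousWithinAt)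
    (fun x hx => ((hf x (Ioo_subset_Icc_self hx)).hasDerivAt
      (Icc_mem_nhds hx.1 hx.2)).hasDerivWithinAt) hf'

theorem norm_sub_le_sqrt_mul_sqrt_integral_norm_sq {f f' : ℝ → E} {a b : ℝ} (hab : a ≤ b)
    (hf : ∀ x ∈ Icc a b, HasDerivWithinAt f (f' x) (Icc a b) x)
    (hf' : ContinuousOn f' (Icc a b)) :
    ‖f b - f a‖ ≤ √(b - a) * √(∫ x in a..b, ‖f' x‖ ^ 2) := by
  rw [← integral_eq_sub_of_hasDerivWithinAt_Icc hab hf (hf'.intervalIntegrable_of_Icc hab)]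
  calc ‖∫ x in a..b, f' x‖ ≤ ∫ x in a..b, ‖(1 : ℝ)‖ * ‖f' x‖ := by
        simpa only [norm_one, one_mul] using intervalIntegral.norm_integral_le_integral_norm hab
    _ ≤ √(∫ x in a..b, ‖(1 : ℝ)‖ ^ 2) * √(∫ x in a..b, ‖f' x‖ ^ 2) :=
        integral_norm_mul_norm_le_sqrt_mul_sqrt hab continuousOn_const hf'
    _ = √(b - a) * √(∫ x in a..b, ‖f' x‖ ^ 2) := by simp

variable {w w' w'' : ℝ → E} {θ : ℝ → F} {δ : ℝ}

theorem integral_norm_mul_norm_le_left_layer (hδ : 0 ≤ δ)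
    (hw : ∀ z ∈ Icc 0 δ, HasDerivWithinAt w (w' z) (Icc 0 δ) z)
    (hw' : ∀ z ∈ Icc 0 δ, HasDerivWithinAt w' (w'' z) (Icc 0 δ) z)
    (hw'' : ContinuousOn w'' (Icc 0 δ)) (hθ : ContinuousOn θ (Icc 0 δ))
    (hw0 : w 0 = 0) (hw'0 : w' 0 = 0) :
    ∫ z in 0..δ, ‖w z‖ * ‖θ z‖ ≤
      δ ^ 2 / 3 * √(∫ z in 0..δ, ‖w'' z‖ ^ 2) * √(∫ z in 0..δ, ‖θ z‖ ^ 2) := by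
  set Y := √(∫ z in 0..δ, ‖w'' z‖ ^ 2)
  have hwc : ContinuousOn w (Icc 0 δ) := fun z hz => (hw z hz).continuousWithinAt
  have hw'c : ContinuousOn w' (Icc 0 δ) := fun z hz => (hw' z hz).continuousWithinAt
  have hsub : ∀ {s}, s ∈ Icc 0 δ → Icc 0 s ⊆ Icc 0 δ := fun hs => Icc_subset_Icc_right hs.2
  have bound_w' : ∀ s ∈ Icc 0 δ, ‖w' s‖ ≤ s ^ (1 / 2 : ℝ) * Y := by
    intro s hs
    have := norm_sub_le_sqrt_mul_sqrt_integral_norm_sq hs.1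
      (fun z hz => (hw' z (hsub hs hz)).mono (hsub hs)) (hw''.mono (hsub hs))
    rw [hw'0, sub_zero, sub_zero, Real.sqrt_eq_rpow] at this
    refine this.trans (mul_le_mul_of_nonneg_left (Real.sqrt_le_sqrt ?_) (Real.rpow_nonneg hs.1 _))
    exact integral_mono_interval le_rfl hs.1 hs.2 (ae_of_all _ fun _ => by positivity)
      ((hw''.norm.pow 2).intervalIntegrable_of_Icc hδ)
  have bound_w : ∀ z ∈ Icc 0 δ, ‖w z‖ ≤ 2 / 3 * Y * z ^ (3 / 2 : ℝ) := by
    intro z hz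
    rw [← sub_zero (w z), ← hw0, ← integral_eq_sub_of_hasDerivWithinAt_Icc hz.1
      (fun s hs => (hw s (hsub hz hs)).mono (hsub hz))
      ((hw'c.mono (hsub hz)).intervalIntegrable_of_Icc hz.1)]
    calc ‖∫ s in 0..z, w' s‖ ≤ ∫ s in 0..z, s ^ (1 / 2 : ℝ) * Y :=
          norm_integral_le_of_norm_le hz.1
            (ae_of_all _ fun s hs => bound_w' s ⟨hs.1.le, hs.2.trans hz.2⟩)
            ((Real.continuous_rpow_const (by norm_num)).mul continuous_const |>.intervalIntegrable _ _)
      _ = 2 / 3 * Y * z ^ (3 / 2 : ℝ) := by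
          rw [intervalIntegral.integral_mul_const, integral_rpow (by norm_num)]
          norm_num
          ring
  have integral_sq : ∫ z in 0..δ, ‖z ^ (3 / 2 : ℝ)‖ ^ 2 = (δ ^ 2 / 2) ^ 2 := by
    rw [integral_congr (g := fun z => z ^ 3) fun z hz => ?_, integral_pow]
    · ring
    rw [uIcc_of_le hδ] at hz
    rw [Real.norm_of_nonneg (Real.rpow_nonneg hz.1 _), ← Real.rpow_natCast, ← Real.rpow_mul hz.1]
    norm_num
  have hpow : ContinuousOn (fun z : ℝ => z ^ (3 / 2 : ℝ)) (Icc 0 δ) :=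
    (Real.continuous_rpow_const (by norm_num)).continuousOn
  calc ∫ z in 0..δ, ‖w z‖ * ‖θ z‖
      ≤ ∫ z in 0..δ, 2 / 3 * Y * (‖z ^ (3 / 2 : ℝ)‖ * ‖θ z‖) := by
        refine integral_mono_on hδ ?_ ?_ fun z hz => ?_
        · exact (hwc.norm.mul hθ.norm).intervalIntegrable_of_Icc hδ
        · exact (((hpow.norm.mul hθ.norm).const_smul (2 / 3 * Y))).intervalIntegrable_of_Icc hδ
        · rw [Real.norm_of_nonneg (Real.rpow_nonneg hz.1 _), ← mul_assoc]
          exact mul_le_mul_of_nonneg_right (bound_w z hz) (norm_nonneg _)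
    _ = 2 / 3 * Y * ∫ z in 0..δ, ‖z ^ (3 / 2 : ℝ)‖ * ‖θ z‖ := integral_const_mul _ _
    _ ≤ 2 / 3 * Y * (√(∫ z in 0..δ, ‖z ^ (3 / 2 : ℝ)‖ ^ 2) * √(∫ z in 0..δ, ‖θ z‖ ^ 2)) := by
        gcongr
        exact integral_norm_mul_norm_le_sqrt_mul_sqrt hδ hpow hθ
    _ = δ ^ 2 / 3 * Y * √(∫ z in 0..δ, ‖θ z‖ ^ 2) := by
        rw [integral_sq, Real.sqrt_sq (by positivity)]
        ring

theorem integral_norm_mul_norm_le_right_layer {b : ℝ} (hδ : 0 ≤ δ)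
    (hw : ∀ z ∈ Icc (b - δ) b, HasDerivWithinAt w (w' z) (Icc (b - δ) b) z)
    (hw' : ∀ z ∈ Icc (b - δ) b, HasDerivWithinAt w' (w'' z) (Icc (b - δ) b) z)
    (hw'' : ContinuousOn w'' (Icc (b - δ) b)) (hθ : ContinuousOn θ (Icc (b - δ) b))
    (hwb : w b = 0) (hw'b : w' b = 0) :
    ∫ z in (b - δ)..b, ‖w z‖ * ‖θ z‖ ≤
      δ ^ 2 / 3 * √(∫ z in (b - δ)..b, ‖w'' z‖ ^ 2) * √(∫ z in (b - δ)..b, ‖θ z‖ ^ 2) := by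
  have hmaps : MapsTo (b - ·) (Icc 0 δ) (Icc (b - δ) b) := fun x hx =>
    ⟨by linarith [hx.2], by linarith [hx.1]⟩
  have hcont : ContinuousOn (b - ·) (Icc 0 δ) := (continuous_sub_left b).continuousOn
  have reflect := integral_norm_mul_norm_le_left_layer (w := fun z => w (b - z))
    (w' := fun z => -w' (b - z)) (w'' := fun z => w'' (b - z)) (θ := fun z => θ (b - z)) hδ
    (by simpa using HasDerivWithinAt.comp_const_sub_Icc (c := b) hw)
    (by simpa [Pi.neg_def] using
      fun z hz => (HasDerivWithinAt.comp_const_sub_Icc (c := b) hw' z hz).neg)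
    (hw''.comp hcont hmaps) (hθ.comp hcont hmaps) (by simpa using hwb) (by simpa using hw'b)
  simpa only [integral_comp_sub_left fun z => ‖w z‖ * ‖θ z‖, sub_zero,
    integral_comp_sub_left fun z => ‖w'' z‖ ^ 2, integral_comp_sub_left fun z => ‖θ z‖ ^ 2]
    using reflect

theorem integral_norm_mul_norm_boundary_layers_le {t : ℝ}
    (hw : ∀ z ∈ Icc 0 1, HasDerivWithinAt w (w' z) (Icc 0 1) z)
    (hw' : ∀ z ∈ Icc 0 1, HasDerivWithinAt w' (w'' z) (Icc 0 1) z)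
    (hw'' : ContinuousOn w'' (Icc 0 1)) (hθ : ContinuousOn θ (Icc 0 1))
    (hw0 : w 0 = 0) (hw1 : w 1 = 0) (hw'0 : w' 0 = 0) (hw'1 : w' 1 = 0)
    (hδ0 : 0 ≤ δ) (hδ2 : δ ≤ 1 / 2) (ht : 0 < t) :
    (∫ z in 0..δ, ‖w z‖ * ‖θ z‖) + ∫ z in (1 - δ)..1, ‖w z‖ * ‖θ z‖ ≤
      δ ^ 2 / 6 * (t * (∫ z in 0..1, ‖w'' z‖ ^ 2) + t⁻¹ * ∫ z in 0..1, ‖θ z‖ ^ 2) := by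
  have restrict {s : Set ℝ} (hs : s ⊆ Icc 0 1) {f f' : ℝ → E}
      (hf : ∀ z ∈ Icc (0 : ℝ) 1, HasDerivWithinAt f (f' z) (Icc 0 1) z) :
      ∀ z ∈ s, HasDerivWithinAt f (f' z) s z := fun z hz => (hf z (hs hz)).mono hs
  have hleft : Icc 0 δ ⊆ Icc (0 : ℝ) 1 := Icc_subset_Icc_right (by linarith)
  have hright : Icc (1 - δ) 1 ⊆ Icc (0 : ℝ) 1 := Icc_subset_Icc_left (by linarith)
  have left := integral_norm_mul_norm_le_left_layer hδ0 (restrict hleft hw)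
    (restrict hleft hw') (hw''.mono hleft) (hθ.mono hleft) hw0 hw'0
  have right := integral_norm_mul_norm_le_right_layer hδ0 (restrict hright hw)
    (restrict hright hw') (hw''.mono hright) (hθ.mono hright) hw1 hw'1
  have young {a b : ℝ} (hab : a ≤ b) :
      √(∫ z in a..b, ‖w'' z‖ ^ 2) * √(∫ z in a..b, ‖θ z‖ ^ 2) ≤
        ((t * ∫ z in a..b, ‖w'' z‖ ^ 2) + t⁻¹ * ∫ z in a..b, ‖θ z‖ ^ 2) / 2 :=
    Real.sqrt_mul_sqrt_le_add_div_two (integral_nonneg hab fun _ _ => by positivity)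
      (integral_nonneg hab fun _ _ => by positivity) ht
  have layers_le {f : ℝ → ℝ} (hf : ContinuousOn f (Icc 0 1)) (hf0 : 0 ≤ f) :
      (∫ z in 0..δ, f z) + ∫ z in (1 - δ)..1, f z ≤ ∫ z in 0..1, f z :=
    integral_add_integral_le_of_nonneg hδ0 (by linarith) (by linarith) hf0
      (hf.intervalIntegrable_of_Icc zero_le_one)
  rw [mul_assoc] at left right
  calc (∫ z in 0..δ, ‖w z‖ * ‖θ z‖) + ∫ z in (1 - δ)..1, ‖w z‖ * ‖θ z‖
      ≤ δ ^ 2 / 3 * (((t * ∫ z in 0..δ, ‖w'' z‖ ^ 2) + t⁻¹ * ∫ z in 0..δ, ‖θ z‖ ^ 2) / 2)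
        + δ ^ 2 / 3 * (((t * ∫ z in (1 - δ)..1, ‖w'' z‖ ^ 2)
          + t⁻¹ * ∫ z in (1 - δ)..1, ‖θ z‖ ^ 2) / 2) := by
        gcongr ?_ + ?_
        · exact left.trans (by gcongr; exact young hδ0)
        · exact right.trans (by gcongr; exact young (by linarith))
    _ = δ ^ 2 / 6 * (t * ((∫ z in 0..δ, ‖w'' z‖ ^ 2) + ∫ z in (1 - δ)..1, ‖w'' z‖ ^ 2)
          + t⁻¹ * ((∫ z in 0..δ, ‖θ z‖ ^ 2) + ∫ z in (1 - δ)..1, ‖θ z‖ ^ 2)) := by ring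
    _ ≤ δ ^ 2 / 6 * (t * (∫ z in 0..1, ‖w'' z‖ ^ 2) + t⁻¹ * ∫ z in 0..1, ‖θ z‖ ^ 2) := by
        gcongr
        exacts [layers_le (hw''.norm.pow 2) fun _ => by positivity,
          layers_le (hθ.norm.pow 2) fun _ => by positivity]

end BoundaryLayer

theorem stmt_12_general (w w' w'' θ θ' : ℝ → ℂ)
    (hw : ∀ z ∈ Set.Icc (0:ℝ) 1, HasDerivWithinAt w (w' z) (Set.Icc 0 1) z)
    (hw' : ∀ z ∈ Set.Icc (0:ℝ) 1, HasDerivWithinAt w' (w'' z) (Set.Icc 0 1) z)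
    (hw''c : ContinuousOn w'' (Set.Icc 0 1))
    (hθ : ∀ z ∈ Set.Icc (0:ℝ) 1, HasDerivWithinAt θ (θ' z) (Set.Icc 0 1) z)
    (hw0 : w 0 = 0) (hw1 : w 1 = 0) (hw'0 : w' 0 = 0) (hw'1 : w' 1 = 0)
    (δ : ℝ) (hδ0 : 0 < δ) (hδ2 : δ ≤ 1/2)
    (p q k : ℝ) (hp : 0 < p) (hq : 0 < q) (hk : 0 < k) :
    (∫ z in (0:ℝ)..δ, ‖w z * starRingEnd ℂ (θ z)‖)
      + (∫ z in (1-δ)..(1:ℝ), ‖w z * starRingEnd ℂ (θ z)‖)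
    ≤ (δ^2 / (4 * Real.sqrt 2)) *
      (p * (∫ z in (0:ℝ)..1, ‖w' z‖^2)
        + (1/p) * (∫ z in (0:ℝ)..1, ‖θ' z‖^2)
        + (q/k^2) * (∫ z in (0:ℝ)..1, ‖w'' z‖^2)
        + (k^2/q) * (∫ z in (0:ℝ)..1, ‖θ z‖^2)) := by
  have hθc : ContinuousOn θ (Icc 0 1) := fun z hz => (hθ z hz).continuousWithinAt
  have hcoef : 4 * √2 ≤ 6 := by
    nlinarith [Real.sq_sqrt (zero_le_two : (0 : ℝ) ≤ 2), Real.sqrt_nonneg 2]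
  have sq_integral_nonneg (f : ℝ → ℂ) : 0 ≤ ∫ z in (0 : ℝ)..1, ‖f z‖ ^ 2 :=
    integral_nonneg zero_le_one fun _ _ => by positivity
  have hw'_sq := sq_integral_nonneg w'
  have hw''_sq := sq_integral_nonneg w''
  have hθ_sq := sq_integral_nonneg θ
  have hθ'_sq := sq_integral_nonneg θ'
  simp only [norm_mul, RCLike.norm_conj, ← inv_div q (k ^ 2)]
  calc _ ≤ δ ^ 2 / 6 * (q / k ^ 2 * (∫ z in 0..1, ‖w'' z‖ ^ 2)
          + (q / k ^ 2)⁻¹ * ∫ z in 0..1, ‖θ z‖ ^ 2) :=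
        integral_norm_mul_norm_boundary_layers_le hw hw' hw''c hθc hw0 hw1 hw'0 hw'1 hδ0.le hδ2
          (by positivity)
    _ ≤ δ ^ 2 / (4 * √2) * (q / k ^ 2 * (∫ z in 0..1, ‖w'' z‖ ^ 2)
          + (q / k ^ 2)⁻¹ * ∫ z in 0..1, ‖θ z‖ ^ 2) := by gcongr
    _ ≤ _ := by
        rw [add_assoc _ (q / k ^ 2 * _)]
        exact mul_le_mul_of_nonneg_left (le_add_of_nonneg_left (by positivity)) (by positivity)

/-- Boundary-layer estimate: for w = w' = 0 at z = 0,1 and 0 < δ ≤ 1/2,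
∫₀^δ |w·conj θ| + ∫_{1−δ}^1 |w·conj θ|
  ≤ (δ²/(4√2))[p∫₀¹|w'|² + (1/p)∫₀¹|θ'|² + (q/k²)∫₀¹|w''|² + (k²/q)∫₀¹|θ|²]. -/
theorem stmt_12 (w w' w'' θ θ' : ℝ → ℂ)
    (hw : ∀ z ∈ Set.Icc (0:ℝ) 1, HasDerivWithinAt w (w' z) (Set.Icc 0 1) z)
    (hw' : ∀ z ∈ Set.Icc (0:ℝ) 1, HasDerivWithinAt w' (w'' z) (Set.Icc 0 1) z)
    (hw''c : ContinuousOn w'' (Set.Icc 0 1))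
    (hθ : ∀ z ∈ Set.Icc (0:ℝ) 1, HasDerivWithinAt θ (θ' z) (Set.Icc 0 1) z)
    (hθ'c : ContinuousOn θ' (Set.Icc 0 1))
    (hw0 : w 0 = 0) (hw1 : w 1 = 0) (hw'0 : w' 0 = 0) (hw'1 : w' 1 = 0)
    (δ : ℝ) (hδ0 : 0 < δ) (hδ2 : δ ≤ 1/2)
    (p q k : ℝ) (hp : 0 < p) (hq : 0 < q) (hk : 0 < k) :
    (∫ z in (0:ℝ)..δ, ‖w z * starRingEnd ℂ (θ z)‖)
      + (∫ z in (1-δ)..(1:ℝ), ‖w z * starRingEnd ℂ (θ z)‖)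
    ≤ (δ^2 / (4 * Real.sqrt 2)) *
      (p * (∫ z in (0:ℝ)..1, ‖w' z‖^2)
        + (1/p) * (∫ z in (0:ℝ)..1, ‖θ' z‖^2)
        + (q/k^2) * (∫ z in (0:ℝ)..1, ‖w'' z‖^2)
        + (k^2/q) * (∫ z in (0:ℝ)..1, ‖θ z‖^2)) :=
  stmt_12_general w w' w'' θ θ' hw hw' hw''c hθ hw0 hw1 hw'0 hw'1 δ hδ0 hδ2 p q k hp hq hk
end

section
/- Let η ≥ 0 and R > 0 be real numbers satisfying R ≥ 32/3 if η ≤ 1/2, and R ≥ (128/3)·η/(1+2η) if η ≥ 1/2. Define δ_s and b_s as follows: if η ≤ 1/2 and (η = 0 or R < (8/3)η^(−2)), then δ_s = 2√(2/3)·R^(−1/2) and b_s = 3/2; if 0 < η ≤ 1/2 and R ≥ (8/3)η^(−2), then δ_s = 2(η/3)^(1/3)·R^(−1/3) and b_s = 1 + δ_s/(2η); if η ≥ 1/2, then δ_s = 2(2/3)^(1/3)·(η/(1+2η))^(1/3)·R^(−1/3) and b_s = 1 + (1+2η)·δ_s/(4η). Then for all real numbers N and Ra with N ≤ 3/(2δ_s)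 and Ra ≥ R·(b_s − 1)/2, one has N ≤ (3√6/4)·√Ra. -/
/-!
In each regime the choice of δ_s and b_s makes the Rayleigh lower bound R(b_s − 1)/2 equal to
exactly 2/(3δ_s²); eliminating δ_s between Nu ≤ 3/(2δ_s) and Ra ≥ 2/(3δ_s²) gives
Nu ≤ (3√6/4)√Ra. The regime η ≥ 1/2 is the regime η ≤ 1/2, R ≥ (8/3)η⁻² with η replaced by
κ = 2η/(1 + 2η).
-/

open Real

namespace Real

lemma rpow_one_div_natCast_pow {x : ℝ} (hx : 0 ≤ x) {n : ℕ} (hn : n ≠ 0) :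
    (x ^ ((1 : ℝ) / n)) ^ n = x := by
  rw [one_div, rpow_inv_natCast_pow hx hn]

lemma rpow_neg_one_div_natCast_pow {x : ℝ} (hx : 0 ≤ x) {n : ℕ} (hn : n ≠ 0) :
    (x ^ (-(1 : ℝ) / n)) ^ n = x⁻¹ := by
  rw [neg_div, rpow_neg hx, inv_pow, rpow_one_div_natCast_pow hx hn]

end Real

lemma sqrt_two_div_three_mul_sq {δ : ℝ} (hδ : 0 < δ) : √(2 / (3 * δ ^ 2)) = √6 / (3 * δ) := by
  have h6 : √6 ^ 2 = 6 := sq_sqrt (by norm_num)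
  rw [sqrt_eq_iff_eq_sq (by positivity) (by positivity), div_pow, h6]
  ring

lemma le_mul_sqrt_of_le_three_div_of_two_div_le {δ N Ra : ℝ} (hδ : 0 < δ) (hN : N ≤ 3 / (2 * δ))
    (hRa : 2 / (3 * δ ^ 2) ≤ Ra) : N ≤ 3 * √6 / 4 * √Ra := by
  have h6 : √6 ^ 2 = 6 := sq_sqrt (by norm_num)
  calc N ≤ 3 / (2 * δ) := hN
    _ = 3 * √6 / 4 * √(2 / (3 * δ ^ 2)) := by
      rw [sqrt_two_div_three_mul_sq hδ]; field_simp; linear_combination -2 * h6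
    _ ≤ 3 * √6 / 4 * √Ra := by gcongr

lemma rayleigh_bound_eq_of_sqrt_width {R δ : ℝ} (hR : 0 < R)
    (hδ : δ = 2 * √(2 / 3) * R ^ (-(1 : ℝ) / 2)) :
    0 < δ ∧ R * (3 / 2 - 1) / 2 = 2 / (3 * δ ^ 2) := by
  have hδ2 : δ ^ 2 = 8 / 3 * R⁻¹ := by
    have := rpow_neg_one_div_natCast_pow hR.le (n := 2) two_ne_zero
    rw [hδ, mul_pow, mul_pow, sq_sqrt (by norm_num)]
    push_cast at this
    rw [this]; ring
  refine ⟨by rw [hδ]; positivity, ?_⟩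
  rw [hδ2]; field_simp; ring

lemma rayleigh_bound_eq_of_cbrt_width {R κ δ : ℝ} (hR : 0 < R) (hκ : 0 < κ)
    (hδ : δ = 2 * (κ / 3) ^ ((1 : ℝ) / 3) * R ^ (-(1 : ℝ) / 3)) :
    0 < δ ∧ R * (1 + δ / (2 * κ) - 1) / 2 = 2 / (3 * δ ^ 2) := by
  have hδ3 : 3 * R * δ ^ 3 = 8 * κ := by
    have h1 := rpow_one_div_natCast_pow (x := κ / 3) (by positivity) (n := 3) three_ne_zero
    have h2 := rpow_neg_one_div_natCast_pow hR.le (n := 3) three_ne_zero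
    push_cast at h1 h2
    rw [hδ, mul_pow, mul_pow, h1, h2]; field_simp; ring
  have hδpos : 0 < δ := by rw [hδ]; positivity
  refine ⟨hδpos, ?_⟩
  field_simp
  linear_combination hδ3

theorem stmt_14_general (η R N Ra δs bs : ℝ) (hη0 : 0 ≤ η) (hR : 0 < R)
    (hcase1 : η ≤ 1/2 → (η = 0 ∨ R < 8/(3*η^2)) →
      δs = 2 * Real.sqrt (2/3) * R ^ (-(1:ℝ)/2) ∧ bs = 3/2)
    (hcase2 : 0 < η → η ≤ 1/2 → 8/(3*η^2) ≤ R →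
      δs = 2 * (η/3) ^ ((1:ℝ)/3) * R ^ (-(1:ℝ)/3) ∧ bs = 1 + δs/(2*η))
    (hcase3 : 1/2 ≤ η →
      δs = 2 * (2/3 : ℝ) ^ ((1:ℝ)/3) * (η/(1 + 2*η)) ^ ((1:ℝ)/3) * R ^ (-(1:ℝ)/3) ∧
      bs = 1 + (1 + 2*η) * δs / (4*η))
    (hN : N ≤ 3/(2*δs)) (hRa : R * (bs - 1)/2 ≤ Ra) :
    N ≤ 3 * Real.sqrt 6 / 4 * Real.sqrt Ra := by
  obtain ⟨hδ, hRayleigh⟩ : 0 < δs ∧ R * (bs - 1) / 2 = 2 / (3 * δs ^ 2) := by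
    rcases le_or_gt η (1 / 2) with hη | hη
    · by_cases hsmall : η = 0 ∨ R < 8 / (3 * η ^ 2)
      · obtain ⟨hδ, rfl⟩ := hcase1 hη hsmall
        exact rayleigh_bound_eq_of_sqrt_width hR hδ
      · push Not at hsmall
        obtain ⟨hδ, rfl⟩ := hcase2 (hη0.lt_of_ne' hsmall.1) hη hsmall.2
        exact rayleigh_bound_eq_of_cbrt_width hR (hη0.lt_of_ne' hsmall.1) hδ
    · obtain ⟨hδ, rfl⟩ := hcase3 hη.le
      have hκ : 0 < 2 * η / (1 + 2 * η) := by positivity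
      have hδκ : δs = 2 * (2 * η / (1 + 2 * η) / 3) ^ ((1 : ℝ) / 3) * R ^ (-(1 : ℝ) / 3) := by
        rw [hδ, mul_assoc 2, ← mul_rpow (by norm_num) (by positivity)]
        ring_nf
      convert rayleigh_bound_eq_of_cbrt_width hR hκ hδκ using 4
      field_simp
      ring
  exact le_mul_sqrt_of_le_three_div_of_two_div_le hδ hN (hRayleigh ▸ hRa)

/-- Algebraic content of Theorem 3: with δ_s, b_s chosen piecewise in the three
regimes, any N ≤ 3/(2δ_s) and Ra ≥ R(b_s−1)/2 satisfy N ≤ (3√6/4)√Ra. -/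
theorem stmt_14 (η R N Ra δs bs : ℝ) (hη0 : 0 ≤ η) (hR : 0 < R)
    (hR1 : η ≤ 1/2 → 32/3 ≤ R)
    (hR2 : 1/2 ≤ η → 128/3 * η/(1 + 2*η) ≤ R)
    (hcase1 : η ≤ 1/2 → (η = 0 ∨ R < 8/(3*η^2)) →
      δs = 2 * Real.sqrt (2/3) * R ^ (-(1:ℝ)/2) ∧ bs = 3/2)
    (hcase2 : 0 < η → η ≤ 1/2 → 8/(3*η^2) ≤ R →
      δs = 2 * (η/3) ^ ((1:ℝ)/3) * R ^ (-(1:ℝ)/3) ∧ bs = 1 + δs/(2*η))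
    (hcase3 : 1/2 ≤ η →
      δs = 2 * (2/3 : ℝ) ^ ((1:ℝ)/3) * (η/(1 + 2*η)) ^ ((1:ℝ)/3) * R ^ (-(1:ℝ)/3) ∧
      bs = 1 + (1 + 2*η) * δs / (4*η))
    (hN : N ≤ 3/(2*δs)) (hRa : R * (bs - 1)/2 ≤ Ra) :
    N ≤ 3 * Real.sqrt 6 / 4 * Real.sqrt Ra :=
  stmt_14_general η R N Ra δs bs hη0 hR hcase1 hcase2 hcase3 hN hRa
end
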